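/- arXiv:math/0212383 — 6 statements merged into one kernel-verified Lean document; each statement's English description precedes it below -/
import Mathlib

section
/- Let (Φ,Φ₁) be a functor from 𝒳 to ℤ-graded R-modules and degree-0 maps, and let ψ = (ψ_p)_{p≥0} be a family where ψ_p is a p-cochain with coefficients in F_{p−1}. Then ψ is a twisting cochain (i.e., δψ_{n−1} = Σ_{p+q=n} ψ_p ∪′ ψ_q for all n ≥ 0) if and only if the data Φ′₀(X) := ψ₀(X), Φ′₁(f) := Φ₁(f) + ψ₁(f), and Φ′_p := ψ_p for p ≥ 2 is an A∞ functor on 𝒳, i.e., ψ₀(X)∘ψ₀(X) = 0 for all objects X and the defining A∞ relation Σ_{i=0}^{p}(−1)^i Φ′_i∘Φ′_{p−i} = Σ_{i=1}^{p−1}(−1)^i Φ′_{p−1}(f₁,…,f_i∘f_{i+1},…,f_p) holds for every p ≥ 1 and every p-simplex. -/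
open CategoryTheory

universe u v w
universe u_1

/-- A `ℤ`-graded `R`-module: a module together with a family of submodules
(the grading). -/
structure GradedMod (R : Type u) [Ring R] where
  carrier : Type v
  [isAddCommGroup : AddCommGroup carrier]
  [isModule : Module R carrier]
  grading : ℤ → Submodule R carrier

attribute [instance] GradedMod.isAddCommGroup GradedMod.isModule

/-- A linear map between graded modules is homogeneous of degree `d`. -/
def HasDeg {R : Type u} [Ring R] {M N : GradedMod R} (d : ℤ)
    (f : M.carrier →ₗ[R] N.carrier) : Prop :=
  ∀ n : ℤ, ∀ x ∈ M.grading n, f x ∈ N.grading (n + d)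

/-- Transport of modules along an equality of indexing objects. -/
def mc {𝒳 : Type w} {R : Type u} [Ring R] (M : 𝒳 → GradedMod R) {a b : 𝒳}
    (h : a = b) : (M a).carrier →ₗ[R] (M b).carrier := by
  subst h; exact LinearMap.id

/-- An infinite composable chain `X 0 ← X 1 ← X 2 ← ⋯` in a category `𝒳`.
A `p`-simplex of `𝒳` is (the beginning of) such a chain. -/
structure Chain (𝒳 : Type w) [Category 𝒳] where
  X : ℕ → 𝒳
  f : ∀ i : ℕ, X (i + 1) ⟶ X i

namespace Chain

variable {𝒳 : Type w} [Category 𝒳]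

/-- The back face starting at the `i`-th object. -/
def back (c : Chain 𝒳) (i : ℕ) : Chain 𝒳 where
  X := fun n => c.X (i + n)
  f := fun n => c.f (i + n)

/-- The face obtained by deleting the object `X j` (`j ≥ 1`) and composing
the two adjacent morphisms. -/
def del (c : Chain 𝒳) (j : ℕ) : Chain 𝒳 where
  X := fun n => if n < j then c.X n else c.X (n + 1)
  f := fun n => by
    show (if n + 1 < j then c.X (n + 1) else c.X (n + 1 + 1)) ⟶
      (if n < j then c.X n else c.X (n + 1))
    by_cases h1 : n + 1 < j
    · rw [if_pos h1, if_pos (Nat.lt_of_succ_lt h1)]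
      exact c.f n
    · rw [if_neg h1]
      by_cases h2 : n < j
      · rw [if_pos h2]
        exact c.f (n + 1) ≫ c.f n
      · rw [if_neg h2]
        exact c.f (n + 1)

theorem back_X (c : Chain 𝒳) (i p : ℕ) (h : i ≤ p) :
    c.X p = (c.back i).X (p - i) := by
  show c.X p = c.X (i + (p - i))
  exact congrArg c.X (by omega)

theorem del_X_zero (c : Chain 𝒳) (j : ℕ) (h : 1 ≤ j) : (c.del j).X 0 = c.X 0 := by
  show (if 0 < j then c.X 0 else c.X 1) = c.X 0
  rw [if_pos (show 0 < j by omega)]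

theorem del_X_top (c : Chain 𝒳) (j p : ℕ) (h : j ≤ p) :
    c.X (p + 1) = (c.del j).X p := by
  show c.X (p + 1) = (if p < j then c.X p else c.X (p + 1))
  rw [if_neg (by omega)]

end Chain

/-- The data of an `A∞` functor on `𝒳` with values in graded `R`-modules:
a graded module `M X` for each object, a degree `-1` map `d = Φ₀` for each
object, and for each `p ≥ 1` and each `p`-simplex (recorded as an infinite
chain, of which only the first `p` morphisms are relevant) a map
`Φ_p(f₁, …, f_p) : M X_p →ₗ M X_0`. -/
structure AInftyData (R : Type u) [Ring R] (𝒳 : Type w) [Category 𝒳] where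
  M : 𝒳 → GradedMod.{u, u_1} R
  d : ∀ A : 𝒳, (M A).carrier →ₗ[R] (M A).carrier
  op : ∀ (p : ℕ) (c : Chain 𝒳), (M (c.X p)).carrier →ₗ[R] (M (c.X 0)).carrier

/-- The axioms making the data of `Φ` into an `A∞` functor:
`Φ₀` has degree `-1` and squares to zero, `Φ_p` has degree `p - 1` and depends
only on the underlying `p`-simplex, and the `A∞` (Sugawara) relation
`∑_{i=0}^{p} (-1)^i Φ_i(f₁,…,f_i) ∘ Φ_{p-i}(f_{i+1},…,f_p)
  = ∑_{i=1}^{p-1} (-1)^i Φ_{p-1}(f₁,…,f_i f_{i+1},…,f_p)`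
holds for every `p ≥ 1` (below `p = m + 1`). -/
structure IsAInfty {R : Type u} [Ring R] {𝒳 : Type w} [Category 𝒳]
    (Φ : AInftyData R 𝒳) : Prop where
  d_deg : ∀ A : 𝒳, HasDeg (-1) (Φ.d A)
  d_sq : ∀ A : 𝒳, (Φ.d A).comp (Φ.d A) = 0
  op_deg : ∀ (p : ℕ) (c : Chain 𝒳), 1 ≤ p → HasDeg ((p : ℤ) - 1) (Φ.op p c)
  op_eq : ∀ (p : ℕ), 1 ≤ p → ∀ (c c' : Chain 𝒳) (hX : ∀ n, n ≤ p → c.X n = c'.X n),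
    (∀ n, n < p → HEq (c.f n) (c'.f n)) →
    Φ.op p c' =
      (mc Φ.M (hX 0 (Nat.zero_le p))).comp
        ((Φ.op p c).comp (mc Φ.M (hX p (le_refl p)).symm))
  relation : ∀ (m : ℕ) (c : Chain 𝒳),
    (Φ.d (c.X 0)).comp (Φ.op (m + 1) c)
      + ∑ i ∈ (Finset.Ico 1 (m + 1)).attach,
          ((-1 : ℤ) ^ i.1) •
            ((Φ.op i.1 c).comp
              ((Φ.op (m + 1 - i.1) (c.back i.1)).comp
                (mc Φ.M (c.back_X i.1 (m + 1)
                  (by have := Finset.mem_Ico.mp i.2; omega)))))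
      + ((-1 : ℤ) ^ (m + 1)) • ((Φ.op (m + 1) c).comp (Φ.d (c.X (m + 1))))
    = ∑ i ∈ (Finset.Ico 1 (m + 1)).attach,
        ((-1 : ℤ) ^ i.1) •
          ((mc Φ.M (c.del_X_zero i.1
              (by have := Finset.mem_Ico.mp i.2; omega))).comp
            ((Φ.op m (c.del i.1)).comp
              (mc Φ.M (c.del_X_top i.1 m
                (by have := Finset.mem_Ico.mp i.2; omega)))))

/-- The data of a functor `(Φ, Φ₁)` from `𝒳` to ℤ-graded `R`-modules with a
candidate twisting cochain `ψ = (ψ_p)_{p ≥ 0}`: `T = Φ₁` is the underlying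
functor, `ψ0` is the `0`-cochain component `ψ₀` (with coefficients in the
degree `-1` endomorphisms), and `ψ p` is the `p`-cochain component for
`p ≥ 1` (a `p`-simplex is recorded as an infinite chain, of which only the
first `p` morphisms are relevant). -/
structure TwistingData (R : Type u) [Ring R] (𝒳 : Type w) [Category 𝒳] where
  M : 𝒳 → GradedMod.{u, u_1} R
  T : ∀ {A B : 𝒳}, (B ⟶ A) → ((M B).carrier →ₗ[R] (M A).carrier)
  ψ0 : ∀ A : 𝒳, (M A).carrier →ₗ[R] (M A).carrier
  ψ : ∀ (p : ℕ) (c : Chain 𝒳), (M (c.X p)).carrier →ₗ[R] (M (c.X 0)).carrier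

/-- The twisting-cochain condition `δψ = ψ ∪' ψ`, written out degreewise:
for `n = 0` it reads `ψ₀ ∘ ψ₀ = 0`; for `n = 1` it reads
`δψ₀ = ψ₀ ∪' ψ₁ + ψ₁ ∪' ψ₀` on `1`-simplices; and for `n = m + 2` it reads
`δψ_{n-1} = ∑_{p+q=n} ψ_p ∪' ψ_q` on `n`-simplices, where
`(ψ_p ∪' ψ_q)(X₀,…,X_{p+q}) = (-1)^p ψ_p(X₀,…,X_p) ∘ ψ_q(X_p,…,X_{p+q})` and
`δφ(X₀,…,X_{p+1}) = Φ₁(f₁) ∘ φ(X₁,…,X_{p+1})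
  + ∑_{i=1}^{p} (-1)^i φ(X₀,…,X̂_i,…,X_{p+1})
  + (-1)^{p+1} φ(X₀,…,X_p) ∘ Φ₁(f_{p+1})`. -/
structure IsTwisting {R : Type u} [Ring R] {𝒳 : Type w} [Category 𝒳]
    (Ψ : TwistingData R 𝒳) : Prop where
  zero : ∀ A : 𝒳, (Ψ.ψ0 A).comp (Ψ.ψ0 A) = 0
  rel0 : ∀ c : Chain 𝒳,
    (Ψ.T (c.f 0)).comp (Ψ.ψ0 (c.X 1))
      + ((-1 : ℤ) ^ 1) • ((Ψ.ψ0 (c.X 0)).comp (Ψ.T (c.f 0)))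
    = (Ψ.ψ0 (c.X 0)).comp (Ψ.ψ 1 c)
      + ((-1 : ℤ) ^ 1) • ((Ψ.ψ 1 c).comp (Ψ.ψ0 (c.X 1)))
  rel : ∀ (m : ℕ) (c : Chain 𝒳),
    (Ψ.T (c.f 0)).comp
        ((Ψ.ψ (m + 1) (c.back 1)).comp
          (mc Ψ.M (congrArg c.X (by omega : m + 1 + 1 = 1 + (m + 1)))))
      + ∑ i ∈ (Finset.Ico 1 (m + 2)).attach,
          ((-1 : ℤ) ^ i.1) •
            ((mc Ψ.M (c.del_X_zero i.1
                (by have := Finset.mem_Ico.mp i.2; omega))).comp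
              ((Ψ.ψ (m + 1) (c.del i.1)).comp
                (mc Ψ.M (c.del_X_top i.1 (m + 1)
                  (by have := Finset.mem_Ico.mp i.2; omega)))))
      + ((-1 : ℤ) ^ (m + 2)) • ((Ψ.ψ (m + 1) c).comp (Ψ.T (c.f (m + 1))))
    = (Ψ.ψ0 (c.X 0)).comp (Ψ.ψ (m + 2) c)
      + ∑ i ∈ (Finset.Ico 1 (m + 2)).attach,
          ((-1 : ℤ) ^ i.1) •
            ((Ψ.ψ i.1 c).comp
              ((Ψ.ψ (m + 2 - i.1) (c.back i.1)).comp
                (mc Ψ.M (c.back_X i.1 (m + 2)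
                  (by have := Finset.mem_Ico.mp i.2; omega)))))
      + ((-1 : ℤ) ^ (m + 2)) • ((Ψ.ψ (m + 2) c).comp (Ψ.ψ0 (c.X (m + 2))))

/-- The `A∞` data `(Φ, ψ₀, Φ₁ + ψ₁, ψ₂, ψ₃, ⋯)` associated to the functor
`(Φ, Φ₁)` and the family `ψ`. -/
def TwistingData.toAInfty {R : Type u} [Ring R] {𝒳 : Type w} [Category 𝒳]
    (Ψ : TwistingData R 𝒳) : AInftyData R 𝒳 where
  M := Ψ.M
  d := Ψ.ψ0
  op := fun p c =>
    match p with
    | 1 => Ψ.T (c.f 0) + Ψ.ψ 1 c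
    | p => Ψ.ψ p c

set_option linter.unusedSectionVars false
section Aux
variable {R : Type u} [Ring R] {𝒳 : Type w} [Category 𝒳]

noncomputable def MC (M : 𝒳 → GradedMod R) (a b : 𝒳) :
    (M a).carrier →ₗ[R] (M b).carrier := by
  classical exact if h : a = b then mc M h else 0

lemma mc_eq_MC (M : 𝒳 → GradedMod R) {a b : 𝒳} (h : a = b) :
    mc M h = MC M a b := by
  unfold MC; rw [dif_pos h]

lemma MC_id (M : 𝒳 → GradedMod R) (a : 𝒳) : MC M a a = LinearMap.id := by
  unfold MC; rw [dif_pos rfl]; rfl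

lemma key0 (Ψ : TwistingData R 𝒳) (c : Chain 𝒳) :
    ((Ψ.T (c.f 0)).comp (Ψ.ψ0 (c.X 1))
      + ((-1 : ℤ) ^ 1) • ((Ψ.ψ0 (c.X 0)).comp (Ψ.T (c.f 0)))
     = (Ψ.ψ0 (c.X 0)).comp (Ψ.ψ 1 c)
      + ((-1 : ℤ) ^ 1) • ((Ψ.ψ 1 c).comp (Ψ.ψ0 (c.X 1))))
    ↔
    ((Ψ.ψ0 (c.X 0)).comp (Ψ.T (c.f 0) + Ψ.ψ 1 c)
      + ∑ i ∈ (Finset.Ico 1 1).attach, ((-1 : ℤ) ^ i.1) •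
          ((id (Ψ.toAInfty.op i.1 c) :
              (Ψ.M (c.X i.1)).carrier →ₗ[R] (Ψ.M (c.X 0)).carrier).comp
            ((Ψ.toAInfty.op (1-i.1) (c.back i.1)).comp
              (mc Ψ.M (c.back_X i.1 1 (by have := Finset.mem_Ico.mp i.2; omega)))))
      + ((-1 : ℤ) ^ 1) • ((Ψ.T (c.f 0) + Ψ.ψ 1 c).comp (Ψ.ψ0 (c.X 1)))
     = ∑ i ∈ (Finset.Ico 1 1).attach, ((-1 : ℤ) ^ i.1) •
          ((mc Ψ.M (c.del_X_zero i.1 (by have := Finset.mem_Ico.mp i.2; omega))).comp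
            ((Ψ.toAInfty.op 0 (c.del i.1)).comp
              (mc Ψ.M (c.del_X_top i.1 0 (by have := Finset.mem_Ico.mp i.2; omega)))))) := by
  have E : ((Ψ.ψ0 (c.X 0)).comp (Ψ.T (c.f 0) + Ψ.ψ 1 c)
      + ∑ i ∈ (Finset.Ico 1 1).attach, ((-1 : ℤ) ^ i.1) •
          ((id (Ψ.toAInfty.op i.1 c) :
              (Ψ.M (c.X i.1)).carrier →ₗ[R] (Ψ.M (c.X 0)).carrier).comp
            ((Ψ.toAInfty.op (1-i.1) (c.back i.1)).comp
              (mc Ψ.M (c.back_X i.1 1 (by have := Finset.mem_Ico.mp i.2; omega)))))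
      + ((-1 : ℤ) ^ 1) • ((Ψ.T (c.f 0) + Ψ.ψ 1 c).comp (Ψ.ψ0 (c.X 1))))
      + ((Ψ.T (c.f 0)).comp (Ψ.ψ0 (c.X 1))
      + ((-1 : ℤ) ^ 1) • ((Ψ.ψ0 (c.X 0)).comp (Ψ.T (c.f 0))))
     = (∑ i ∈ (Finset.Ico 1 1).attach, ((-1 : ℤ) ^ i.1) •
          ((mc Ψ.M (c.del_X_zero i.1 (by have := Finset.mem_Ico.mp i.2; omega))).comp
            ((Ψ.toAInfty.op 0 (c.del i.1)).comp
              (mc Ψ.M (c.del_X_top i.1 0 (by have := Finset.mem_Ico.mp i.2; omega))))))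
      + ((Ψ.ψ0 (c.X 0)).comp (Ψ.ψ 1 c)
      + ((-1 : ℤ) ^ 1) • ((Ψ.ψ 1 c).comp (Ψ.ψ0 (c.X 1)))) := by
    simp only [mc_eq_MC]
    rw [Finset.sum_attach (Finset.Ico 1 1) (fun j => ((-1:ℤ))^j •
        ((id (Ψ.toAInfty.op j c) :
            (Ψ.M (c.X j)).carrier →ₗ[R] (Ψ.M (c.X 0)).carrier).comp
          ((Ψ.toAInfty.op (1-j) (c.back j)).comp (MC Ψ.M (c.X 1) ((c.back j).X (1-j)))))),
      Finset.sum_attach (Finset.Ico 1 1) (fun j => ((-1:ℤ))^j •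
        ((MC Ψ.M ((c.del j).X 0) (c.X 0)).comp
          ((Ψ.toAInfty.op 0 (c.del j)).comp (MC Ψ.M (c.X (0+1)) ((c.del j).X 0)))))]
    simp only [Finset.Ico_self, Finset.sum_empty, pow_one, neg_one_smul]
    simp only [LinearMap.comp_add, LinearMap.add_comp]
    abel
  constructor
  · intro h; rw [h] at E; exact add_right_cancel E
  · intro h; rw [h] at E; exact add_left_cancel E

end Aux

set_option linter.unusedSectionVars false
section Aux2
variable {R : Type u} [Ring R] {𝒳 : Type w} [Category 𝒳]

lemma T_congr (Ψ : TwistingData R 𝒳) {A B : 𝒳} {f g : B ⟶ A} (h : HEq f g) :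
    Ψ.T f = Ψ.T g := by rw [eq_of_heq h]

lemma del_f_zero (c : Chain 𝒳) : HEq ((c.del 1).f 0) (c.f 1 ≫ c.f 0) := by
  simp only [Chain.del]
  rw [dif_neg (by omega), dif_pos (by omega)]
  simp only [eq_mpr_eq_cast]
  exact (cast_heq _ _).trans ((cast_heq _ _).trans (by norm_num))

lemma keyS (Ψ : TwistingData R 𝒳)
    (hTcomp : ∀ (A B C : 𝒳) (f : B ⟶ A) (g : C ⟶ B),
      Ψ.T (g ≫ f) = (Ψ.T f).comp (Ψ.T g)) (c : Chain 𝒳) :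
    ((Ψ.T (c.f 0)).comp ((Ψ.ψ 1 (c.back 1)).comp
        (mc Ψ.M (congrArg c.X (by omega : (2:ℕ) = 1+1))))
      + ∑ i ∈ (Finset.Ico 1 2).attach, ((-1:ℤ)^i.1) •
          ((mc Ψ.M (c.del_X_zero i.1 (by have := Finset.mem_Ico.mp i.2; omega))).comp
            ((Ψ.ψ 1 (c.del i.1)).comp
              (mc Ψ.M (c.del_X_top i.1 1 (by have := Finset.mem_Ico.mp i.2; omega)))))
      + ((-1:ℤ)^2) • ((Ψ.ψ 1 c).comp (Ψ.T (c.f 1)))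
     = (Ψ.ψ0 (c.X 0)).comp (Ψ.ψ 2 c)
      + ∑ i ∈ (Finset.Ico 1 2).attach, ((-1:ℤ)^i.1) •
          ((Ψ.ψ i.1 c).comp ((Ψ.ψ (2-i.1) (c.back i.1)).comp
            (mc Ψ.M (c.back_X i.1 2 (by have := Finset.mem_Ico.mp i.2; omega)))))
      + ((-1:ℤ)^2) • ((Ψ.ψ 2 c).comp (Ψ.ψ0 (c.X 2))))
    ↔
    ((Ψ.ψ0 (c.X 0)).comp (Ψ.ψ 2 c)
      + ∑ i ∈ (Finset.Ico 1 2).attach, ((-1:ℤ)^i.1) •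
          ((id (Ψ.toAInfty.op i.1 c) :
              (Ψ.M (c.X i.1)).carrier →ₗ[R] (Ψ.M (c.X 0)).carrier).comp
            ((Ψ.toAInfty.op (2-i.1) (c.back i.1)).comp
              (mc Ψ.M (c.back_X i.1 2 (by have := Finset.mem_Ico.mp i.2; omega)))))
      + ((-1:ℤ)^2) • ((Ψ.ψ 2 c).comp (Ψ.ψ0 (c.X 2)))
     = ∑ i ∈ (Finset.Ico 1 2).attach, ((-1:ℤ)^i.1) •
          ((mc Ψ.M (c.del_X_zero i.1 (by have := Finset.mem_Ico.mp i.2; omega))).comp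
            ((Ψ.toAInfty.op 1 (c.del i.1)).comp
              (mc Ψ.M (c.del_X_top i.1 1 (by have := Finset.mem_Ico.mp i.2; omega)))))) := by
  have hT1 : Ψ.T ((c.del 1).f 0) = (Ψ.T (c.f 0)).comp (Ψ.T (c.f 1)) := by
    exact (T_congr Ψ (del_f_zero c)).trans (hTcomp _ _ _ (c.f 0) (c.f 1))
  have E : ((Ψ.ψ0 (c.X 0)).comp (Ψ.ψ 2 c)
      + ∑ i ∈ (Finset.Ico 1 2).attach, ((-1:ℤ)^i.1) •
          ((id (Ψ.toAInfty.op i.1 c) :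
              (Ψ.M (c.X i.1)).carrier →ₗ[R] (Ψ.M (c.X 0)).carrier).comp
            ((Ψ.toAInfty.op (2-i.1) (c.back i.1)).comp
              (mc Ψ.M (c.back_X i.1 2 (by have := Finset.mem_Ico.mp i.2; omega)))))
      + ((-1:ℤ)^2) • ((Ψ.ψ 2 c).comp (Ψ.ψ0 (c.X 2))))
      + ((Ψ.T (c.f 0)).comp ((Ψ.ψ 1 (c.back 1)).comp
        (mc Ψ.M (congrArg c.X (by omega : (2:ℕ) = 1+1))))
      + ∑ i ∈ (Finset.Ico 1 2).attach, ((-1:ℤ)^i.1) •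
          ((mc Ψ.M (c.del_X_zero i.1 (by have := Finset.mem_Ico.mp i.2; omega))).comp
            ((Ψ.ψ 1 (c.del i.1)).comp
              (mc Ψ.M (c.del_X_top i.1 1 (by have := Finset.mem_Ico.mp i.2; omega)))))
      + ((-1:ℤ)^2) • ((Ψ.ψ 1 c).comp (Ψ.T (c.f 1))))
     = (∑ i ∈ (Finset.Ico 1 2).attach, ((-1:ℤ)^i.1) •
          ((mc Ψ.M (c.del_X_zero i.1 (by have := Finset.mem_Ico.mp i.2; omega))).comp
            ((Ψ.toAInfty.op 1 (c.del i.1)).comp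
              (mc Ψ.M (c.del_X_top i.1 1 (by have := Finset.mem_Ico.mp i.2; omega))))))
      + ((Ψ.ψ0 (c.X 0)).comp (Ψ.ψ 2 c)
      + ∑ i ∈ (Finset.Ico 1 2).attach, ((-1:ℤ)^i.1) •
          ((Ψ.ψ i.1 c).comp ((Ψ.ψ (2-i.1) (c.back i.1)).comp
            (mc Ψ.M (c.back_X i.1 2 (by have := Finset.mem_Ico.mp i.2; omega)))))
      + ((-1:ℤ)^2) • ((Ψ.ψ 2 c).comp (Ψ.ψ0 (c.X 2)))) := by
    simp only [mc_eq_MC]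
    rw [Finset.sum_attach (Finset.Ico 1 2) (fun j => ((-1:ℤ))^j •
        ((id (Ψ.toAInfty.op j c) :
            (Ψ.M (c.X j)).carrier →ₗ[R] (Ψ.M (c.X 0)).carrier).comp
          ((Ψ.toAInfty.op (2-j) (c.back j)).comp (MC Ψ.M (c.X 2) ((c.back j).X (2-j)))))),
      Finset.sum_attach (Finset.Ico 1 2) (fun j => ((-1:ℤ))^j •
        ((MC Ψ.M ((c.del j).X 0) (c.X 0)).comp
          ((Ψ.ψ 1 (c.del j)).comp (MC Ψ.M (c.X (1+1)) ((c.del j).X 1))))),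
      Finset.sum_attach (Finset.Ico 1 2) (fun j => ((-1:ℤ))^j •
        ((MC Ψ.M ((c.del j).X 0) (c.X 0)).comp
          ((Ψ.toAInfty.op 1 (c.del j)).comp (MC Ψ.M (c.X (1+1)) ((c.del j).X 1))))),
      Finset.sum_attach (Finset.Ico 1 2) (fun j => ((-1:ℤ))^j •
        ((Ψ.ψ j c).comp
          ((Ψ.ψ (2-j) (c.back j)).comp (MC Ψ.M (c.X 2) ((c.back j).X (2-j))))))]
    rw [show Finset.Ico 1 2 = {1} from rfl]
    rw [Finset.sum_singleton, Finset.sum_singleton, Finset.sum_singleton,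
      Finset.sum_singleton]
    apply LinearMap.ext; intro x
    show (Ψ.ψ0 (c.X 0) (Ψ.ψ 2 c x)
        + (-1:ℤ)^1 • (Ψ.T (c.f 0) (Ψ.T (c.f 1) (MC Ψ.M (c.X 2) (c.X 2) x)
              + @mc 𝒳 R _ Ψ.M ((c.back 1).X 0) (c.X 1) rfl
                  (Ψ.ψ 1 (c.back 1) (@mc 𝒳 R _ Ψ.M (c.X 2) ((c.back 1).X 1) rfl
                    (MC Ψ.M (c.X 2) (c.X 2) x))))
            + Ψ.ψ 1 c (Ψ.T (c.f 1) (MC Ψ.M (c.X 2) (c.X 2) x)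
              + @mc 𝒳 R _ Ψ.M ((c.back 1).X 0) (c.X 1) rfl
                  (Ψ.ψ 1 (c.back 1) (@mc 𝒳 R _ Ψ.M (c.X 2) ((c.back 1).X 1) rfl
                    (MC Ψ.M (c.X 2) (c.X 2) x)))))
        + (-1:ℤ)^2 • Ψ.ψ 2 c (Ψ.ψ0 (c.X 2) x))
      + (Ψ.T (c.f 0) (@mc 𝒳 R _ Ψ.M ((c.back 1).X 0) (c.X 1) rfl
            (Ψ.ψ 1 (c.back 1) (@mc 𝒳 R _ Ψ.M (c.X 2) ((c.back 1).X 1) rfl x)))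
        + (-1:ℤ)^1 • MC Ψ.M (c.X 0) (c.X 0) (@mc 𝒳 R _ Ψ.M ((c.del 1).X 0) (c.X 0) rfl
            (Ψ.ψ 1 (c.del 1) (MC Ψ.M (c.X 2) ((c.del 1).X 1) x)))
        + (-1:ℤ)^2 • Ψ.ψ 1 c (Ψ.T (c.f 1) x))
      = (-1:ℤ)^1 • MC Ψ.M (c.X 0) (c.X 0) (Ψ.T (c.f 1 ≫ c.f 0) (MC Ψ.M (c.X 2) (c.X 2) x)
            + @mc 𝒳 R _ Ψ.M ((c.del 1).X 0) (c.X 0) rfl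
              (Ψ.ψ 1 (c.del 1) (MC Ψ.M (c.X 2) ((c.del 1).X 1) x)))
      + (Ψ.ψ0 (c.X 0) (Ψ.ψ 2 c x)
        + (-1:ℤ)^1 • Ψ.ψ 1 c (@mc 𝒳 R _ Ψ.M ((c.back 1).X 0) (c.X 1) rfl
            (Ψ.ψ 1 (c.back 1) (@mc 𝒳 R _ Ψ.M (c.X 2) ((c.back 1).X 1) rfl
              (MC Ψ.M (c.X 2) (c.X 2) x))))
        + (-1:ℤ)^2 • Ψ.ψ 2 c (Ψ.ψ0 (c.X 2) x))
    simp only [MC_id, LinearMap.id_apply, map_add, hTcomp, LinearMap.comp_apply, pow_one,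
      show ((-1:ℤ))^2 = 1 from by norm_num, one_smul, neg_one_smul, smul_add]
    abel
  constructor
  · intro h; rw [h] at E; exact add_right_cancel E
  · intro h; rw [h] at E; exact add_left_cancel E

end Aux2

set_option linter.unusedSectionVars false
set_option maxHeartbeats 1000000
section Aux3
variable {R : Type u} [Ring R] {𝒳 : Type w} [Category 𝒳]

lemma keyG (Ψ : TwistingData R 𝒳) (c : Chain 𝒳) (n : ℕ) :
    ((Ψ.T (c.f 0)).comp ((Ψ.ψ (n+2) (c.back 1)).comp
        (mc Ψ.M (congrArg c.X (by omega : (n+3:ℕ) = 1+(n+2)))))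
      + ∑ i ∈ (Finset.Ico 1 (n+3)).attach, ((-1:ℤ)^i.1) •
          ((mc Ψ.M (c.del_X_zero i.1 (by have := Finset.mem_Ico.mp i.2; omega))).comp
            ((Ψ.ψ (n+2) (c.del i.1)).comp
              (mc Ψ.M (c.del_X_top i.1 (n+2) (by have := Finset.mem_Ico.mp i.2; omega)))))
      + ((-1:ℤ)^(n+3)) • ((Ψ.ψ (n+2) c).comp (Ψ.T (c.f (n+2))))
     = (Ψ.ψ0 (c.X 0)).comp (Ψ.ψ (n+3) c)
      + ∑ i ∈ (Finset.Ico 1 (n+3)).attach, ((-1:ℤ)^i.1) •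
          ((Ψ.ψ i.1 c).comp ((Ψ.ψ (n+3-i.1) (c.back i.1)).comp
            (mc Ψ.M (c.back_X i.1 (n+3) (by have := Finset.mem_Ico.mp i.2; omega)))))
      + ((-1:ℤ)^(n+3)) • ((Ψ.ψ (n+3) c).comp (Ψ.ψ0 (c.X (n+3)))))
    ↔
    ((Ψ.ψ0 (c.X 0)).comp (Ψ.ψ (n+3) c)
      + ∑ i ∈ (Finset.Ico 1 (n+3)).attach, ((-1:ℤ)^i.1) •
          ((id (Ψ.toAInfty.op i.1 c) :
              (Ψ.M (c.X i.1)).carrier →ₗ[R] (Ψ.M (c.X 0)).carrier).comp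
            ((Ψ.toAInfty.op (n+3-i.1) (c.back i.1)).comp
              (mc Ψ.M (c.back_X i.1 (n+3) (by have := Finset.mem_Ico.mp i.2; omega)))))
      + ((-1:ℤ)^(n+3)) • ((Ψ.ψ (n+3) c).comp (Ψ.ψ0 (c.X (n+3))))
     = ∑ i ∈ (Finset.Ico 1 (n+3)).attach, ((-1:ℤ)^i.1) •
          ((mc Ψ.M (c.del_X_zero i.1 (by have := Finset.mem_Ico.mp i.2; omega))).comp
            ((Ψ.ψ (n+2) (c.del i.1)).comp
              (mc Ψ.M (c.del_X_top i.1 (n+2) (by have := Finset.mem_Ico.mp i.2; omega)))))) := by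
  have hsum : ∑ j ∈ Finset.Ico 1 (n+3), (((-1:ℤ))^j •
        ((id (Ψ.toAInfty.op j c) :
            (Ψ.M (c.X j)).carrier →ₗ[R] (Ψ.M (c.X 0)).carrier).comp
          ((Ψ.toAInfty.op (n+3-j) (c.back j)).comp
            (MC Ψ.M (c.X (n+3)) ((c.back j).X (n+3-j))))))
      = (∑ j ∈ Finset.Ico 1 (n+3), (((-1:ℤ))^j •
          ((Ψ.ψ j c).comp ((Ψ.ψ (n+3-j) (c.back j)).comp
            (MC Ψ.M (c.X (n+3)) ((c.back j).X (n+3-j)))))))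
        + (-((Ψ.T (c.f 0)).comp ((Ψ.ψ (n+2) (c.back 1)).comp
            (MC Ψ.M (c.X (n+3)) ((c.back 1).X (n+2))))))
        + ((-1:ℤ)^(n+2)) • ((Ψ.ψ (n+2) c).comp (Ψ.T (c.f (n+2)))) := by
    have hterm : ∀ j ∈ Finset.Ico 1 (n+3), (((-1:ℤ))^j •
        ((id (Ψ.toAInfty.op j c) :
            (Ψ.M (c.X j)).carrier →ₗ[R] (Ψ.M (c.X 0)).carrier).comp
          ((Ψ.toAInfty.op (n+3-j) (c.back j)).comp
            (MC Ψ.M (c.X (n+3)) ((c.back j).X (n+3-j))))))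
      = (((-1:ℤ))^j •
          ((Ψ.ψ j c).comp ((Ψ.ψ (n+3-j) (c.back j)).comp
            (MC Ψ.M (c.X (n+3)) ((c.back j).X (n+3-j))))))
        + (if j = 1 then -((Ψ.T (c.f 0)).comp ((Ψ.ψ (n+2) (c.back 1)).comp
            (MC Ψ.M (c.X (n+3)) ((c.back 1).X (n+2))))) else 0)
        + (if j = n+2 then ((-1:ℤ)^(n+2)) • ((Ψ.ψ (n+2) c).comp (Ψ.T (c.f (n+2))))
           else 0) := by
      intro j hj
      rw [Finset.mem_Ico] at hj
      by_cases h1 : j = 1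
      · subst h1
        rw [if_pos rfl, if_neg (by omega), show n+3-1 = n+2 from rfl]
        simp only [id_eq,
          (show ∀ c' : Chain 𝒳, Ψ.toAInfty.op 1 c' = Ψ.T (c'.f 0) + Ψ.ψ 1 c'
            from fun _ => rfl),
          (show ∀ c' : Chain 𝒳, Ψ.toAInfty.op (n+2) c' = Ψ.ψ (n+2) c'
            from fun _ => rfl)]
        apply LinearMap.ext; intro x
        show (-1:ℤ)^1 • (Ψ.T (c.f 0) (@mc 𝒳 R _ Ψ.M ((c.back 1).X 0) (c.X 1) rfl
              (Ψ.ψ (n+2) (c.back 1) (MC Ψ.M (c.X (n+3)) ((c.back 1).X (n+2)) x)))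
            + Ψ.ψ 1 c (@mc 𝒳 R _ Ψ.M ((c.back 1).X 0) (c.X 1) rfl
              (Ψ.ψ (n+2) (c.back 1) (MC Ψ.M (c.X (n+3)) ((c.back 1).X (n+2)) x))))
          = (-1:ℤ)^1 • Ψ.ψ 1 c (@mc 𝒳 R _ Ψ.M ((c.back 1).X 0) (c.X 1) rfl
              (Ψ.ψ (n+2) (c.back 1) (MC Ψ.M (c.X (n+3)) ((c.back 1).X (n+2)) x)))
            + -(Ψ.T (c.f 0) (@mc 𝒳 R _ Ψ.M ((c.back 1).X 0) (c.X 1) rfl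
              (Ψ.ψ (n+2) (c.back 1) (MC Ψ.M (c.X (n+3)) ((c.back 1).X (n+2)) x)))) + 0
        simp only [pow_one, smul_add, neg_one_smul, add_zero]
        abel
      · by_cases h2 : j = n+2
        · subst h2
          rw [if_neg h1, if_pos rfl, show n+3-(n+2) = 1 by omega]
          simp only [id_eq,
            (show ∀ c' : Chain 𝒳, Ψ.toAInfty.op 1 c' = Ψ.T (c'.f 0) + Ψ.ψ 1 c'
              from fun _ => rfl),
            (show ∀ c' : Chain 𝒳, Ψ.toAInfty.op (n+2) c' = Ψ.ψ (n+2) c'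
              from fun _ => rfl)]
          rw [show MC Ψ.M (c.X (n+3)) ((c.back (n+2)).X 1) = LinearMap.id
              from MC_id _ _]
          apply LinearMap.ext; intro x
          show (-1:ℤ)^(n+2) • Ψ.ψ (n+2) c (Ψ.T (c.f (n+2)) x
                + @mc 𝒳 R _ Ψ.M ((c.back (n+2)).X 0) (c.X (n+2)) rfl
                  (Ψ.ψ 1 (c.back (n+2)) (@mc 𝒳 R _ Ψ.M (c.X (n+3)) ((c.back (n+2)).X 1) rfl x)))
            = (-1:ℤ)^(n+2) • Ψ.ψ (n+2) c (@mc 𝒳 R _ Ψ.M ((c.back (n+2)).X 0) (c.X (n+2)) rfl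
                  (Ψ.ψ 1 (c.back (n+2)) (@mc 𝒳 R _ Ψ.M (c.X (n+3)) ((c.back (n+2)).X 1) rfl x)))
              + 0 + (-1:ℤ)^(n+2) • Ψ.ψ (n+2) c (Ψ.T (c.f (n+2)) x)
          simp only [map_add, smul_add, add_zero]
          abel
        · obtain ⟨k, rfl⟩ : ∃ k, j = k+2 := ⟨j-2, by omega⟩
          obtain ⟨l, hl⟩ : ∃ l, n+3-(k+2) = l+2 := ⟨n-(k+1), by omega⟩
          rw [if_neg h1, if_neg h2, hl]
          simp only [id_eq,
            (show ∀ (p : ℕ) (c' : Chain 𝒳),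
                Ψ.toAInfty.op (p+2) c' = Ψ.ψ (p+2) c' from fun _ _ => rfl),
            add_zero]
          rfl
    rw [Finset.sum_congr rfl hterm, Finset.sum_add_distrib, Finset.sum_add_distrib,
      Finset.sum_ite_eq' (Finset.Ico 1 (n+3)) 1,
      Finset.sum_ite_eq' (Finset.Ico 1 (n+3)) (n+2),
      if_pos (Finset.mem_Ico.mpr ⟨by omega, by omega⟩),
      if_pos (Finset.mem_Ico.mpr ⟨by omega, by omega⟩)]
  have E : ((Ψ.ψ0 (c.X 0)).comp (Ψ.ψ (n+3) c)
      + ∑ i ∈ (Finset.Ico 1 (n+3)).attach, ((-1:ℤ)^i.1) •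
          ((id (Ψ.toAInfty.op i.1 c) :
              (Ψ.M (c.X i.1)).carrier →ₗ[R] (Ψ.M (c.X 0)).carrier).comp
            ((Ψ.toAInfty.op (n+3-i.1) (c.back i.1)).comp
              (mc Ψ.M (c.back_X i.1 (n+3) (by have := Finset.mem_Ico.mp i.2; omega)))))
      + ((-1:ℤ)^(n+3)) • ((Ψ.ψ (n+3) c).comp (Ψ.ψ0 (c.X (n+3)))))
      + ((Ψ.T (c.f 0)).comp ((Ψ.ψ (n+2) (c.back 1)).comp
        (mc Ψ.M (congrArg c.X (by omega : (n+3:ℕ) = 1+(n+2)))))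
      + ∑ i ∈ (Finset.Ico 1 (n+3)).attach, ((-1:ℤ)^i.1) •
          ((mc Ψ.M (c.del_X_zero i.1 (by have := Finset.mem_Ico.mp i.2; omega))).comp
            ((Ψ.ψ (n+2) (c.del i.1)).comp
              (mc Ψ.M (c.del_X_top i.1 (n+2) (by have := Finset.mem_Ico.mp i.2; omega)))))
      + ((-1:ℤ)^(n+3)) • ((Ψ.ψ (n+2) c).comp (Ψ.T (c.f (n+2)))))
     = (∑ i ∈ (Finset.Ico 1 (n+3)).attach, ((-1:ℤ)^i.1) •
          ((mc Ψ.M (c.del_X_zero i.1 (by have := Finset.mem_Ico.mp i.2; omega))).comp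
            ((Ψ.ψ (n+2) (c.del i.1)).comp
              (mc Ψ.M (c.del_X_top i.1 (n+2) (by have := Finset.mem_Ico.mp i.2; omega))))))
      + ((Ψ.ψ0 (c.X 0)).comp (Ψ.ψ (n+3) c)
      + ∑ i ∈ (Finset.Ico 1 (n+3)).attach, ((-1:ℤ)^i.1) •
          ((Ψ.ψ i.1 c).comp ((Ψ.ψ (n+3-i.1) (c.back i.1)).comp
            (mc Ψ.M (c.back_X i.1 (n+3) (by have := Finset.mem_Ico.mp i.2; omega)))))
      + ((-1:ℤ)^(n+3)) • ((Ψ.ψ (n+3) c).comp (Ψ.ψ0 (c.X (n+3))))) := by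
    simp only [mc_eq_MC]
    rw [Finset.sum_attach (Finset.Ico 1 (n+3)) (fun j => ((-1:ℤ))^j •
        ((id (Ψ.toAInfty.op j c) :
            (Ψ.M (c.X j)).carrier →ₗ[R] (Ψ.M (c.X 0)).carrier).comp
          ((Ψ.toAInfty.op (n+3-j) (c.back j)).comp
            (MC Ψ.M (c.X (n+3)) ((c.back j).X (n+3-j)))))),
      Finset.sum_attach (Finset.Ico 1 (n+3)) (fun j => ((-1:ℤ))^j •
        ((MC Ψ.M ((c.del j).X 0) (c.X 0)).comp
          ((Ψ.ψ (n+2) (c.del j)).comp (MC Ψ.M (c.X (n+2+1)) ((c.del j).X (n+2)))))),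
      Finset.sum_attach (Finset.Ico 1 (n+3)) (fun j => ((-1:ℤ))^j •
        ((Ψ.ψ j c).comp ((Ψ.ψ (n+3-j) (c.back j)).comp
          (MC Ψ.M (c.X (n+3)) ((c.back j).X (n+3-j))))))]
    rw [hsum]
    rw [show @mc 𝒳 R _ Ψ.M (c.X (n+3)) ((c.back 1).X (n+2))
          (congrArg c.X (by omega : (n+3:ℕ) = 1+(n+2)))
        = MC Ψ.M (c.X (n+3)) ((c.back 1).X (n+2)) from mc_eq_MC _ _]
    rw [show ((-1:ℤ))^(n+3) = -((-1:ℤ))^(n+2) from by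
      rw [show n+3 = (n+2)+1 from rfl, pow_succ]; ring]
    simp only [neg_smul]
    abel
  constructor
  · intro h; rw [h] at E; exact add_right_cancel E
  · intro h; rw [h] at E; exact add_left_cancel E

end Aux3


set_option linter.unusedVariables false
section Aux4
variable {R : Type u} [Ring R] {𝒳 : Type w} [Category 𝒳]

lemma T_trans (Ψ : TwistingData R 𝒳) {A B A' B' : 𝒳} (hA : A = A') (hB : B = B')
    {f : B ⟶ A} {f' : B' ⟶ A'} (hf : HEq f f') :
    Ψ.T f' = (mc Ψ.M hA).comp ((Ψ.T f).comp (mc Ψ.M hB.symm)) := by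
  subst hA; subst hB; cases hf; rfl

end Aux4


/-- Let `(Φ, Φ₁)` be a functor from `𝒳` to ℤ-graded
`R`-modules and degree-0 maps, and let `ψ = (ψ_p)` be a family where `ψ_p` is
a `p`-cochain with coefficients in the degree `p - 1` part of
`Hom(Φ-, Φ-)`.  Then `ψ` is a twisting cochain (`δψ = ψ ∪' ψ`) if and only if
`(Φ, ψ₀, Φ₁ + ψ₁, ψ₂, ψ₃, ⋯)` is an `A∞` functor. -/
theorem statement2 {R : Type u} [Ring R] {𝒳 : Type w} [Category 𝒳]
    (Ψ : TwistingData R 𝒳)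
    (hTid : ∀ A : 𝒳, Ψ.T (𝟙 A) = LinearMap.id)
    (hTcomp : ∀ (A B C : 𝒳) (f : B ⟶ A) (g : C ⟶ B),
      Ψ.T (g ≫ f) = (Ψ.T f).comp (Ψ.T g))
    (hTdeg : ∀ (A B : 𝒳) (f : B ⟶ A), HasDeg 0 (Ψ.T f))
    (hψ0deg : ∀ A : 𝒳, HasDeg (-1) (Ψ.ψ0 A))
    (hψdeg : ∀ (p : ℕ) (c : Chain 𝒳), 1 ≤ p → HasDeg ((p : ℤ) - 1) (Ψ.ψ p c))
    (hψwd : ∀ (p : ℕ), 1 ≤ p → ∀ (c c' : Chain 𝒳)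
      (hX : ∀ n, n ≤ p → c.X n = c'.X n),
      (∀ n, n < p → HEq (c.f n) (c'.f n)) →
      Ψ.ψ p c' =
        (mc Ψ.M (hX 0 (Nat.zero_le p))).comp
          ((Ψ.ψ p c).comp (mc Ψ.M (hX p (le_refl p)).symm))) :
    IsTwisting Ψ ↔ IsAInfty Ψ.toAInfty := by
  constructor
  · intro h
    refine ⟨hψ0deg, h.zero, ?_, ?_, ?_⟩
    · -- op_deg
      rintro (_|_|p) c hp
      · omega
      · intro m x hx
        have h1 := hTdeg _ _ (c.f 0) m x hx
        have h2 := hψdeg 1 c le_rfl m x hx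
        have e : m + (((1:ℕ):ℤ) - 1) = m + 0 := by norm_num
        show (Ψ.T (c.f 0) + Ψ.ψ 1 c) x ∈ (Ψ.M (c.X 0)).grading (m + (((1:ℕ):ℤ) - 1))
        rw [e]
        exact Submodule.add_mem _ h1 (by rwa [e] at h2)
      · exact hψdeg (p+2) c (by omega)
    · -- op_eq
      rintro (_|_|p) hp c c' hX hf
      · omega
      · have h1 : Ψ.T (c'.f 0) = (mc Ψ.M (hX 0 (Nat.zero_le 1))).comp
            ((Ψ.T (c.f 0)).comp (mc Ψ.M (hX 1 (le_refl 1)).symm)) :=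
          T_trans Ψ (hX 0 (Nat.zero_le 1)) (hX 1 (le_refl 1)) (hf 0 (by omega))
        have h2 := hψwd 1 le_rfl c c' hX hf
        show Ψ.T (c'.f 0) + Ψ.ψ 1 c'
          = (mc Ψ.M (hX 0 (Nat.zero_le 1))).comp
            ((Ψ.T (c.f 0) + Ψ.ψ 1 c).comp (mc Ψ.M (hX 1 (le_refl 1)).symm))
        rw [h1, h2, LinearMap.add_comp, LinearMap.comp_add]
      · exact hψwd (p+2) (by omega) c c' hX hf
    · -- relation
      rintro (_|_|m) c
      · exact (key0 Ψ c).mp (h.rel0 c)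
      · exact (keyS Ψ hTcomp c).mp (h.rel 0 c)
      · exact (keyG Ψ c m).mp (h.rel (m+1) c)
  · intro ha
    refine ⟨ha.d_sq, fun c => (key0 Ψ c).mpr (ha.relation 0 c), ?_⟩
    rintro (_|m) c
    · exact (keyS Ψ hTcomp c).mpr (ha.relation 1 c)
    · exact (keyG Ψ c m).mpr (ha.relation (m+2) c)
end

section
/- Let R be a ring and C a nonnegatively graded chain complex of projective R-modules (C_n = 0 for n < 0, each C_n projective) such that every homology module H_n(C) is a projective R-module. Then C is chain homotopy equivalent to its homology complex, i.e., to the chain complex with H_n(C) in degree n and all differentials zero: there exist chain maps j : H_*(C) → C and q : C → H_*(C) with q∘j chain homotopic to the identity and j∘q chain homotopic to the identity. -/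
open CategoryTheory
open CategoryTheory.Limits

namespace Statement6Aux

universe v u
variable {R : Type u} [Ring R] (C : ChainComplex (ModuleCat.{v} R) ℕ)

/-- The cycles submodule. -/
noncomputable def Z (n : ℕ) : Submodule R (C.X n) := LinearMap.ker ((C.sc n).g.hom)

/-- The boundaries, as a submodule of the cycles. -/
noncomputable def Bz (n : ℕ) : Submodule R (Z C n) := LinearMap.range ((C.sc n).moduleCatToCycles)

lemma mem_Z_zero (x : C.X 0) : x ∈ Z C 0 := by
  have h : C.dFrom 0 = 0 := C.dFrom_eq_zero (by
    rw [ChainComplex.next_nat_zero]; exact fun (h : (0:ℕ)+1 = 0) => by omega)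
  show (C.sc 0).g x = 0
  show (C.dFrom 0) x = 0
  rw [h]; rfl

lemma mem_Z_succ_iff {n : ℕ} (x : C.X (n+1)) : x ∈ Z C (n+1) ↔ C.d (n+1) n x = 0 := by
  have r : (ComplexShape.down ℕ).Rel (n+1) n := rfl
  have h := C.dFrom_comp_xNextIso r
  constructor
  · intro hx
    have : (C.dFrom (n+1) ≫ (C.xNextIso r).hom) x = C.d (n+1) n x := by rw [h]
    rw [← this]
    have hx' : C.dFrom (n+1) x = 0 := hx
    show (C.xNextIso r).hom (C.dFrom (n+1) x) = 0
    rw [hx']; exact map_zero _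
  · intro hx
    have h2 := C.dFrom_eq r
    show C.dFrom (n+1) x = 0
    rw [h2]
    show (C.xNextIso r).inv (C.d (n+1) n x) = 0
    rw [hx]; exact map_zero _

lemma d_mem_Z (n : ℕ) (x : C.X (n+1)) : C.d (n+1) n x ∈ Z C n := by
  have r : (ComplexShape.down ℕ).Rel (n+1) n := rfl
  have h := C.xPrevIso_comp_dTo r
  have : C.d (n+1) n x = C.dTo n ((C.xPrevIso r).inv x) := by
    rw [← h]; rfl
  show C.dFrom n (C.d (n+1) n x) = 0
  rw [this]
  have := C.dTo_comp_dFrom n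
  calc C.dFrom n (C.dTo n ((C.xPrevIso r).inv x))
      = (C.dTo n ≫ C.dFrom n) ((C.xPrevIso r).inv x) := rfl
    _ = 0 := by rw [this]; rfl

/-- The boundary map, corestricted to boundaries-in-cycles. -/
noncomputable def phi (n : ℕ) : C.X (n+1) →ₗ[R] Bz C n :=
  LinearMap.codRestrict (Bz C n)
    (LinearMap.codRestrict (Z C n) (C.d (n+1) n).hom (d_mem_Z C n))
    (by
      intro x
      have r : (ComplexShape.down ℕ).Rel (n+1) n := rfl
      refine ⟨(C.xPrevIso r).inv x, ?_⟩
      apply Subtype.ext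
      show C.dTo n ((C.xPrevIso r).inv x) = C.d (n+1) n x
      rw [← C.xPrevIso_comp_dTo r]; rfl)

@[simp] lemma phi_coe (n : ℕ) (x : C.X (n+1)) :
    ((phi C n x : Z C n) : C.X n) = C.d (n+1) n x := rfl

lemma boundary_mem_Bz (n : ℕ) (x : C.X (n+1)) :
    (⟨C.d (n+1) n x, d_mem_Z C n x⟩ : Z C n) ∈ Bz C n := by
  exact (phi C n x).2

lemma phi_surj (n : ℕ) : Function.Surjective (phi C n) := by
  rintro ⟨z, hz⟩
  obtain ⟨p, hp⟩ := hz
  have r : (ComplexShape.down ℕ).Rel (n+1) n := rfl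
  refine ⟨(C.xPrevIso r).hom p, ?_⟩
  apply Subtype.ext
  apply Subtype.ext
  show C.d (n+1) n ((C.xPrevIso r).hom p) = (z : C.X n)
  rw [← hp]
  show C.d (n+1) n ((C.xPrevIso r).hom p) = C.dTo n p
  rw [C.dTo_eq r]
  rfl

lemma phi_eq_zero_of_mem_Z {n : ℕ} (x : C.X (n+1)) (hx : x ∈ Z C (n+1)) :
    phi C n x = 0 := by
  apply Subtype.ext; apply Subtype.ext
  show C.d (n+1) n x = 0
  exact (mem_Z_succ_iff C x).1 hx

section Induction

variable (hproj : ∀ n : ℕ, Module.Projective R (C.X n))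
variable (hHproj : ∀ n : ℕ, Module.Projective R (Z C n ⧸ Bz C n))

lemma projZ_zero (hp : Module.Projective R (C.X 0)) : Module.Projective R (Z C 0) := by
  have : Module.Projective R (C.X 0) := hp
  exact Module.Projective.of_split (Z C 0).subtype
    (LinearMap.codRestrict (Z C 0) LinearMap.id (fun x => mem_Z_zero C x))
    (by ext x; rfl)

lemma projBz (n : ℕ) (hZ : Module.Projective R (Z C n))
    (hH : Module.Projective R (Z C n ⧸ Bz C n)) :
    Module.Projective R (Bz C n) := by
  obtain ⟨s, hs⟩ := Module.projective_lifting_property (R := R) (Bz C n).mkQ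
    (LinearMap.id (M := Z C n ⧸ Bz C n)) (Submodule.mkQ_surjective _)
  have hs' : ∀ z : Z C n, (Bz C n).mkQ (s ((Bz C n).mkQ z)) = (Bz C n).mkQ z := by
    intro z
    exact congrArg (fun f => f ((Bz C n).mkQ z)) hs
  refine Module.Projective.of_split (Bz C n).subtype
    (LinearMap.codRestrict (Bz C n) (LinearMap.id - s.comp (Bz C n).mkQ) ?_) ?_
  · intro z
    rw [← Submodule.Quotient.mk_eq_zero (Bz C n)]
    show (Bz C n).mkQ (z - s ((Bz C n).mkQ z)) = 0
    rw [map_sub, hs', sub_self]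
  · ext b
    have h0 : (Bz C n).mkQ b = 0 := (Submodule.Quotient.mk_eq_zero _).2 b.2
    simp only [LinearMap.coe_comp, Function.comp_apply, Submodule.coe_subtype,
      LinearMap.codRestrict_apply, LinearMap.sub_apply, LinearMap.id_apply]
    rw [h0, map_zero, sub_zero]

lemma exists_u (n : ℕ) (hB : Module.Projective R (Bz C n)) :
    ∃ u : Bz C n →ₗ[R] C.X (n+1),
      ∀ b : Bz C n, C.d (n+1) n (u b) = ((b : Z C n) : C.X n) := by
  obtain ⟨u, hu⟩ := Module.projective_lifting_property (R := R) (phi C n)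
    (LinearMap.id (M := Bz C n)) (phi_surj C n)
  refine ⟨u, fun b => ?_⟩
  have : phi C n (u b) = b := congrArg (fun f => f b) hu
  calc C.d (n+1) n (u b) = ((phi C n (u b) : Z C n) : C.X n) := rfl
    _ = ((b : Z C n) : C.X n) := by rw [this]

lemma projZ_succ (n : ℕ) (hp : Module.Projective R (C.X (n+1)))
    (u : Bz C n →ₗ[R] C.X (n+1))
    (hu : ∀ b : Bz C n, C.d (n+1) n (u b) = ((b : Z C n) : C.X n)) :
    Module.Projective R (Z C (n+1)) := by
  have : Module.Projective R (C.X (n+1)) := hp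
  refine Module.Projective.of_split (Z C (n+1)).subtype
    (LinearMap.codRestrict (Z C (n+1)) (LinearMap.id - u.comp (phi C n)) ?_) ?_
  · intro x
    rw [mem_Z_succ_iff]
    show C.d (n+1) n (x - u (phi C n x)) = 0
    rw [map_sub, hu, phi_coe, sub_self]
  · ext z
    simp [phi_eq_zero_of_mem_Z C _ z.2]

variable (hproj : ∀ n : ℕ, Module.Projective R (C.X n))
variable (hHproj : ∀ n : ℕ, Module.Projective R (Z C n ⧸ Bz C n))

include hproj hHproj in
lemma main_induction : ∀ n : ℕ,
    ∃ u : Bz C n →ₗ[R] C.X (n+1), ∀ b : Bz C n, C.d (n+1) n (u b) = ((b : Z C n) : C.X n) := by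
  have key : ∀ n : ℕ, Module.Projective R (Z C n) := by
    intro n
    induction n with
    | zero => exact projZ_zero C (hproj 0)
    | succ n ih =>
      obtain ⟨u, hu⟩ := exists_u C n (projBz C n ih (hHproj n))
      exact projZ_succ C n (hproj (n+1)) u hu
  exact fun n => exists_u C n (projBz C n (key n) (hHproj n))

end Induction

section Construction

variable (u : ∀ n, Bz C n →ₗ[R] C.X (n+1))
variable (hu : ∀ n (b : Bz C n), C.d (n+1) n (u n b) = ((b : Z C n) : C.X n))
variable (s : ∀ n, (Z C n ⧸ Bz C n) →ₗ[R] Z C n)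
variable (hs : ∀ n (h : Z C n ⧸ Bz C n), (Bz C n).mkQ (s n h) = h)

/-- The projection of `C.X n` onto the cycles. -/
noncomputable def piZ : ∀ n, C.X n →ₗ[R] Z C n
  | 0 => LinearMap.codRestrict (Z C 0) LinearMap.id (mem_Z_zero C)
  | (n+1) => LinearMap.codRestrict (Z C (n+1)) (LinearMap.id - (u n).comp (phi C n))
      (fun x => (mem_Z_succ_iff C _).2 (by
        show C.d (n+1) n (x - u n (phi C n x)) = 0
        rw [map_sub, hu, phi_coe, sub_self]))

@[simp] lemma piZ_coe_zero (x : C.X 0) : ((piZ C u hu 0 x : C.X 0)) = x := rfl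

@[simp] lemma piZ_coe_succ (n : ℕ) (x : C.X (n+1)) :
    ((piZ C u hu (n+1) x : C.X (n+1))) = x - u n (phi C n x) := rfl

lemma piZ_of_mem {n : ℕ} (x : C.X n) (hx : x ∈ Z C n) :
    piZ C u hu n x = ⟨x, hx⟩ := by
  cases n with
  | zero => exact Subtype.ext rfl
  | succ n =>
    apply Subtype.ext
    show x - u n (phi C n x) = x
    rw [phi_eq_zero_of_mem_Z C x hx, map_zero, sub_zero]

/-- The projection of the cycles onto the boundaries. -/
noncomputable def rho (n : ℕ) : Z C n →ₗ[R] Bz C n :=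
  LinearMap.codRestrict (Bz C n) (LinearMap.id - (s n).comp (Bz C n).mkQ)
    (fun z => by
      rw [← Submodule.Quotient.mk_eq_zero (Bz C n)]
      show (Bz C n).mkQ (z - s n ((Bz C n).mkQ z)) = 0
      rw [map_sub, hs, sub_self])

@[simp] lemma rho_coe (n : ℕ) (z : Z C n) :
    ((rho C s hs n z : Z C n)) = z - s n ((Bz C n).mkQ z) := rfl

/-- The contracting homotopy. -/
noncomputable def hcmp (n : ℕ) : C.X n →ₗ[R] C.X (n+1) :=
  (u n).comp ((rho C s hs n).comp (piZ C u hu n))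

lemma d_hcmp (n : ℕ) (x : C.X n) :
    C.d (n+1) n (hcmp C u hu s hs n x) =
      ((piZ C u hu n x : C.X n)) -
        ((s n ((Bz C n).mkQ (piZ C u hu n x)) : C.X n)) := by
  show C.d (n+1) n (u n (rho C s hs n (piZ C u hu n x))) = _
  rw [hu]
  show ((rho C s hs n (piZ C u hu n x) : Z C n) : C.X n) = _
  rw [rho_coe, Submodule.coe_sub]

lemma hcmp_d (n : ℕ) (x : C.X (n+1)) :
    hcmp C u hu s hs n (C.d (n+1) n x) = u n (phi C n x) := by
  show u n (rho C s hs n (piZ C u hu n (C.d (n+1) n x))) = u n (phi C n x)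
  congr 1
  apply Subtype.ext
  apply Subtype.ext
  rw [piZ_of_mem C u hu _ (d_mem_Z C n x)]
  have h0 : (Bz C n).mkQ ⟨C.d (n+1) n x, d_mem_Z C n x⟩ = 0 :=
    (Submodule.Quotient.mk_eq_zero _).2 (boundary_mem_Bz C n x)
  have h1 : ((rho C s hs n ⟨C.d (n+1) n x, d_mem_Z C n x⟩ : Z C n)) =
      ⟨C.d (n+1) n x, d_mem_Z C n x⟩ := by
    rw [rho_coe, h0, map_zero, sub_zero]
  rw [h1]
  rfl

/-- The homology complex. -/
noncomputable def Dcx : ChainComplex (ModuleCat.{v} R) ℕ :=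
  ChainComplex.of (fun n => C.homology n) (fun _ => 0) (fun _ => by simp)

/-- The chain map from the homology complex to `C`. -/
noncomputable def jmap : Dcx C ⟶ C where
  f n := ((C.sc n).moduleCatHomologyIso.hom ≫
    ModuleCat.ofHom ((Z C n).subtype.comp (s n)) :
      (C.sc n).homology ⟶ C.X n)
  comm' := by
    intro i j hij
    obtain rfl : j + 1 = i := hij
    show _ ≫ C.d (j+1) j = (Dcx C).d (j+1) j ≫ _
    have hD : (Dcx C).d (j+1) j = 0 := ChainComplex.of_d (fun n => C.homology n) (fun _ => 0) j
    erw [hD, zero_comp]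
    ext x
    show C.d (j+1) j
      (((Z C (j+1)).subtype.comp (s (j+1)))
        ((C.sc (j+1)).moduleCatHomologyIso.hom x)) = 0
    exact (mem_Z_succ_iff C _).1 (s (j+1) _).2

/-- The chain map from `C` to the homology complex. -/
noncomputable def qmap : C ⟶ Dcx C where
  f n := (ModuleCat.ofHom (((Bz C n).mkQ).comp (piZ C u hu n)) ≫
    (C.sc n).moduleCatHomologyIso.inv : C.X n ⟶ (C.sc n).homology)
  comm' := by
    intro i j hij
    obtain rfl : j + 1 = i := hij
    show _ ≫ (Dcx C).d (j+1) j = C.d (j+1) j ≫ _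
    have hD : (Dcx C).d (j+1) j = 0 := ChainComplex.of_d (fun n => C.homology n) (fun _ => 0) j
    erw [hD, comp_zero]
    symm
    ext x
    show (C.sc j).moduleCatHomologyIso.inv
      ((Bz C j).mkQ (piZ C u hu j (C.d (j+1) j x))) = 0
    rw [piZ_of_mem C u hu _ (d_mem_Z C j x)]
    have h0 : (Bz C j).mkQ ⟨C.d (j+1) j x, d_mem_Z C j x⟩ = 0 :=
      (Submodule.Quotient.mk_eq_zero _).2 (boundary_mem_Bz C j x)
    rw [h0]; exact map_zero _

lemma qj_apply (n : ℕ) (x : C.X n) :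
    ((qmap C u hu ≫ jmap C s).f n) x =
      ((s n ((Bz C n).mkQ (piZ C u hu n x)) : C.X n)) := by
  show ((Z C n).subtype.comp (s n))
      ((C.sc n).moduleCatHomologyIso.hom
        ((C.sc n).moduleCatHomologyIso.inv ((Bz C n).mkQ (piZ C u hu n x)))) = _
  have h1 : ∀ y, (C.sc n).moduleCatHomologyIso.hom
      ((C.sc n).moduleCatHomologyIso.inv y) = y := fun y =>
    congrArg (fun f => f y) ((C.sc n).moduleCatHomologyIso.inv_hom_id)
  erw [h1]
  rfl

/-- The homotopy equivalence. -/
noncomputable def htpyEquiv : HomotopyEquiv C (Dcx C) where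
  hom := qmap C u hu
  inv := jmap C s
  homotopyHomInvId :=
    { hom := fun i j => if h : j = i + 1 then
        (-(ModuleCat.ofHom (hcmp C u hu s hs i))) ≫ eqToHom (congrArg C.X h.symm) else 0
      zero := fun i j hn => dif_neg (fun h => hn h.symm)
      comm := by
        intro n
        cases n with
        | zero =>
          rw [Homotopy.dNext_zero_chainComplex, Homotopy.prevD_chainComplex]
          simp only [dite_true]
          rw [eqToHom_refl, Category.comp_id]
          rw [Preadditive.neg_comp]
          ext x
          rw [qj_apply]
          show _ = 0 + -(C.d 1 0 (hcmp C u hu s hs 0 x)) + x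
          rw [d_hcmp, piZ_coe_zero]
          abel
        | succ n =>
          rw [Homotopy.dNext_succ_chainComplex, Homotopy.prevD_chainComplex]
          simp only [dite_true]
          rw [eqToHom_refl, eqToHom_refl, Category.comp_id, Category.comp_id]
          rw [Preadditive.comp_neg, Preadditive.neg_comp]
          ext x
          rw [qj_apply]
          show _ = -(hcmp C u hu s hs n (C.d (n+1) n x)) +
            -(C.d (n+2) (n+1) (hcmp C u hu s hs (n+1) x)) + x
          rw [hcmp_d, d_hcmp, piZ_coe_succ]
          abel }
  homotopyInvHomId := Homotopy.ofEq (by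
    ext n x
    show ((C.sc n).moduleCatHomologyIso.inv
      ((Bz C n).mkQ (piZ C u hu n
        ((s n ((C.sc n).moduleCatHomologyIso.hom x) : Z C n) : C.X n)))) = x
    erw [piZ_of_mem C u hu _ (s n _).2, Subtype.coe_eta, hs]
    exact congrArg (fun f => f x) ((C.sc n).moduleCatHomologyIso.hom_inv_id))

end Construction

end Statement6Aux

open Statement6Aux in
/-- Let `R` be a ring and `C` a nonnegatively graded chain
complex of projective `R`-modules such that every homology module
`H_n(C)` is projective.  Then `C` is chain homotopy equivalent to its
homology complex, i.e. to the chain complex with `H_n(C)` in degree `n` and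
all differentials zero. -/
theorem statement6 (R : Type*) [Ring R] (C : ChainComplex (ModuleCat R) ℕ)
    (hproj : ∀ n : ℕ, Module.Projective R (C.X n))
    (hHproj : ∀ n : ℕ, Module.Projective R (C.homology n)) :
    Nonempty
      (HomotopyEquiv C
        (ChainComplex.of (fun n => C.homology n) (fun _ => 0)
          (fun _ => by simp))) := by
  have hH2 : ∀ n : ℕ, Module.Projective R (Z C n ⧸ Bz C n) := by
    intro n
    haveI : Module.Projective R ((C.sc n).homology) := hHproj n
    exact Module.Projective.of_equiv ((C.sc n).moduleCatHomologyIso.toLinearEquiv)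
  obtain ⟨u, hu⟩ := Classical.axiomOfChoice (main_induction C hproj hH2)
  have hs0 : ∀ n : ℕ, ∃ s : (Z C n ⧸ Bz C n) →ₗ[R] Z C n,
      ∀ h : Z C n ⧸ Bz C n, (Bz C n).mkQ (s h) = h := by
    intro n
    haveI := hH2 n
    obtain ⟨s, hsc⟩ := Module.projective_lifting_property (R := R) (Bz C n).mkQ
      (LinearMap.id (M := Z C n ⧸ Bz C n)) (Submodule.mkQ_surjective _)
    exact ⟨s, fun h => congrArg (fun f => f h) hsc⟩
  obtain ⟨s, hs⟩ := Classical.axiomOfChoice hs0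
  exact ⟨htpyEquiv C u hu s hs⟩
end

section
/- Let E be a Banach algebra with unit 1, A₁ : ℝ → E continuous, and A₀ : ℝ → E differentiable with A₀′(t) = A₁(t)·A₀(t) − A₀(t)·A₁(t) for all t ∈ ℝ. Fix s ∈ ℝ and let Φ : ℝ → E be differentiable with Φ′(t) = A₁(t)·Φ(t) and Φ(s) = 1. Then A₀(t)·Φ(t) = Φ(t)·A₀(s) for all t ∈ ℝ. (This says that the parallel transport of the connection d − A₁ is a chain map with respect to the differentials A₀.) -/
open Set

/-- Let `E` be a Banach algebra with unit, `A₁ : ℝ → E`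
continuous, and `A₀ : ℝ → E` differentiable with
`A₀'(t) = A₁(t)·A₀(t) - A₀(t)·A₁(t)`.  If `Φ` is the parallel transport of
the connection `d - A₁` based at `s` (i.e. `Φ'(t) = A₁(t)·Φ(t)`, `Φ(s) = 1`),
then `A₀(t)·Φ(t) = Φ(t)·A₀(s)` for all `t`: parallel transport is a chain
map with respect to the differentials `A₀`. -/
theorem statement11 {E : Type*} [NormedRing E] [NormedAlgebra ℝ E]
    [CompleteSpace E]
    (A₁ : ℝ → E) (hA₁ : Continuous A₁)
    (A₀ : ℝ → E)
    (hA₀ : ∀ t : ℝ, HasDerivAt A₀ (A₁ t * A₀ t - A₀ t * A₁ t) t)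
    (s : ℝ) (Φ : ℝ → E)
    (hΦ : ∀ t : ℝ, HasDerivAt Φ (A₁ t * Φ t) t)
    (hΦs : Φ s = 1) :
    ∀ t : ℝ, A₀ t * Φ t = Φ t * A₀ s := by
  intro t
  set a : ℝ := min s t - 1 with ha
  set b : ℝ := max s t + 1 with hb
  have has : a < s := by simp [ha]; linarith [min_le_left s t]
  have hsb : s < b := by simp [hb]; linarith [le_max_left s t]
  have hat : a < t := by simp [ha]; linarith [min_le_right s t]
  have htb : t < b := by simp [hb]; linarith [le_max_right s t]
  -- clamp
  set c : ℝ → ℝ := fun u => max a (min b u) with hc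
  have hcont : Continuous c := continuous_const.max (continuous_const.min continuous_id)
  have hceq : ∀ u ∈ Icc a b, c u = u := by
    intro u hu
    simp [hc, min_eq_right hu.2, max_eq_right hu.1]
  -- bound for A₁ on Icc a b
  obtain ⟨C, hC⟩ := (isCompact_Icc (a := a) (b := b)).exists_bound_of_continuousOn
    hA₁.continuousOn
  set K : NNReal := ⟨max C 0, le_max_right _ _⟩ with hK
  set v : ℝ → E → E := fun u x => A₁ (c u) * x with hv
  have hlip : ∀ u : ℝ, LipschitzWith K (v u) := by
    intro u
    apply LipschitzWith.of_dist_le_mul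
    intro x y
    simp only [hv, dist_eq_norm, ← mul_sub]
    calc ‖A₁ (c u) * (x - y)‖ ≤ ‖A₁ (c u)‖ * ‖x - y‖ := norm_mul_le _ _
      _ ≤ K * ‖x - y‖ := by
          apply mul_le_mul_of_nonneg_right _ (norm_nonneg _)
          have : c u ∈ Icc a b := by
            constructor
            · exact le_max_left _ _
            · simp only [hc]
              exact max_le (le_of_lt (lt_of_lt_of_le has hsb.le)) (min_le_left _ _)
          exact le_trans (hC _ this) (le_max_left _ _)
  set f : ℝ → E := fun u => A₀ u * Φ u with hf
  set g : ℝ → E := fun u => Φ u * A₀ s with hg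
  have hf' : ∀ u ∈ Ioo a b, HasDerivAt f (v u (f u)) u := by
    intro u hu
    have := (hA₀ u).mul (hΦ u)
    have heq : (A₁ u * A₀ u - A₀ u * A₁ u) * Φ u + A₀ u * (A₁ u * Φ u)
        = v u (f u) := by
      simp [hv, hf, hceq u (Ioo_subset_Icc_self hu)]
      noncomm_ring
    rw [heq] at this
    exact this
  have hg' : ∀ u ∈ Ioo a b, HasDerivAt g (v u (g u)) u := by
    intro u hu
    have := (hΦ u).mul_const (A₀ s)
    have heq : A₁ u * Φ u * A₀ s = v u (g u) := by
      simp [hv, hg, hceq u (Ioo_subset_Icc_self hu)]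
      rw [mul_assoc]
    rw [heq] at this
    exact this
  have hfc : ContinuousOn f (Icc a b) := by
    apply ContinuousOn.mul
    · exact fun u _ => ((hA₀ u).continuousAt).continuousWithinAt
    · exact fun u _ => ((hΦ u).continuousAt).continuousWithinAt
  have hgc : ContinuousOn g (Icc a b) := by
    apply ContinuousOn.mul
    · exact fun u _ => ((hΦ u).continuousAt).continuousWithinAt
    · exact continuousOn_const
  have key : EqOn f g (Icc a b) :=
    ODE_solution_unique_of_mem_Icc (s := fun _ => (univ : Set E))
      (fun u _ => (hlip u).lipschitzOnWith) ⟨has, hsb⟩ hfc hf'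
      (fun _ _ => mem_univ _) hgc hg' (fun _ _ => mem_univ _)
      (by simp [hf, hg, hΦs])
  have := key ⟨hat.le, htb.le⟩
  simpa [hf, hg] using this
end

section
/- Let E be a Banach algebra with unit 1, A : ℝ → E continuous, and s ≤ t real numbers. Then the series Φ(t,s) = 1 + Σ_{m=1}^{∞} ∫_{s ≤ t_m ≤ ⋯ ≤ t₂ ≤ t₁ ≤ t} A(t₁)·A(t₂)⋯A(t_m) dt₁⋯dt_m (Chen's iterated integrals, Bochner integrals over the ordered m-simplex {s ≤ t_m ≤ ⋯ ≤ t₁ ≤ t}) converges absolutely in E, and the resulting function t ↦ Φ(t,s) is differentiable with ∂_t Φ(t,s) = A(t)·Φ(t,s) and Φ(s,s) = 1; i.e., the iterated integral series equals the parallel transport of the connection d − A. -/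
open MeasureTheory Set
open scoped ENNReal NNReal

set_option linter.unusedSectionVars false

/-- The `m`-th Chen iterated integral
`∫_{s ≤ t_m ≤ ⋯ ≤ t₁ ≤ t} A(t₁)·A(t₂)⋯A(t_m) dt₁⋯dt_m`
(a Bochner integral over the ordered `m`-simplex). -/
noncomputable def chenTerm {E : Type*} [NormedRing E] [NormedAlgebra ℝ E]
    [CompleteSpace E] (A : ℝ → E) (s t : ℝ) (m : ℕ) : E :=
  ∫ u in {u : Fin m → ℝ |
      (∀ i, s ≤ u i ∧ u i ≤ t) ∧ ∀ i j : Fin m, i ≤ j → u j ≤ u i},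
    (List.ofFn fun i => A (u i)).prod

namespace Chen

variable {E : Type*} [NormedRing E] [NormedAlgebra ℝ E] [CompleteSpace E]

def simplex (s t : ℝ) (m : ℕ) : Set (Fin m → ℝ) :=
  {u | (∀ i, s ≤ u i ∧ u i ≤ t) ∧ ∀ i j : Fin m, i ≤ j → u j ≤ u i}

lemma chenTerm_def (A : ℝ → E) (s t : ℝ) (m : ℕ) :
    chenTerm A s t m = ∫ u in simplex s t m, (List.ofFn fun i => A (u i)).prod := rfl

lemma isClosed_simplex (s t : ℝ) (m : ℕ) : IsClosed (simplex s t m) := by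
  have h1 : IsClosed {u : Fin m → ℝ | ∀ i, s ≤ u i ∧ u i ≤ t} := by
    have : {u : Fin m → ℝ | ∀ i, s ≤ u i ∧ u i ≤ t}
        = ⋂ i, ({u | s ≤ u i} ∩ {u | u i ≤ t}) := by
      ext u; simp [forall_and]
    rw [this]
    exact isClosed_iInter fun i =>
      (isClosed_le continuous_const (continuous_apply i)).inter
        (isClosed_le (continuous_apply i) continuous_const)
  have h2 : IsClosed {u : Fin m → ℝ | ∀ i j : Fin m, i ≤ j → u j ≤ u i} := by
    have : {u : Fin m → ℝ | ∀ i j : Fin m, i ≤ j → u j ≤ u i}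
        = ⋂ (i) (j) (_ : i ≤ j), {u | u j ≤ u i} := by
      ext u; simp
    rw [this]
    exact isClosed_iInter fun i => isClosed_iInter fun j => isClosed_iInter fun _ =>
      isClosed_le (continuous_apply j) (continuous_apply i)
  exact h1.inter h2

lemma measurableSet_simplex (s t : ℝ) (m : ℕ) : MeasurableSet (simplex s t m) :=
  (isClosed_simplex s t m).measurableSet

lemma continuous_prodFn (A : ℝ → E) (hA : Continuous A) (m : ℕ) :
    Continuous fun u : Fin m → ℝ => (List.ofFn fun i => A (u i)).prod := by
  simp only [List.ofFn_eq_map]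
  exact continuous_list_prod _ fun i _ => hA.comp (continuous_apply i)

lemma simplex_subset_box (s t : ℝ) (m : ℕ) :
    simplex s t m ⊆ Set.pi Set.univ fun _ : Fin m => Icc s t := by
  intro u hu i _
  exact hu.1 i

lemma integrableOn_prodFn (A : ℝ → E) (hA : Continuous A) (s t : ℝ) (m : ℕ) :
    IntegrableOn (fun u : Fin m → ℝ => (List.ofFn fun i => A (u i)).prod)
      (simplex s t m) := by
  have hbox : IsCompact (Set.pi Set.univ fun _ : Fin m => Icc s t) :=
    isCompact_univ_pi fun _ => isCompact_Icc
  exact (((continuous_prodFn A hA m).continuousOn.integrableOn_compact hbox).mono_set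
    (simplex_subset_box s t m))

lemma chenTerm_zero (A : ℝ → E) (s t : ℝ) : chenTerm A s t 0 = 1 := by
  rw [chenTerm_def]
  have h : simplex s t 0 = Set.univ := by
    ext u; simp [simplex]
  rw [h, Measure.restrict_univ]
  simp only [List.ofFn_zero, List.prod_nil]
  rw [integral_const]
  have hv : (volume : Measure (Fin 0 → ℝ)) Set.univ = 1 := by
    rw [show (volume : Measure (Fin 0 → ℝ)) = Measure.pi fun _ => volume from rfl,
      Measure.pi_univ]
    simp
  rw [measureReal_def, hv]
  simp

lemma cons_mem_simplex_iff {m : ℕ} (s t y : ℝ) (v : Fin m → ℝ) :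
    (Fin.cons y v ∈ simplex s t (m+1)) ↔ y ∈ Icc s t ∧ v ∈ simplex s y m := by
  constructor
  · rintro ⟨hb, ha⟩
    refine ⟨⟨(hb 0).1, (hb 0).2⟩, fun i => ⟨(hb i.succ).1, ?_⟩, fun i j hij => ?_⟩
    · have := ha 0 i.succ (Fin.zero_le _)
      simpa using this
    · have := ha i.succ j.succ (by rwa [Fin.succ_le_succ_iff])
      simpa using this
  · rintro ⟨⟨hsy, hyt⟩, hb, ha⟩
    constructor
    · intro i
      refine Fin.cases ?_ (fun k => ?_) i
      · simpa using ⟨hsy, hyt⟩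
      · simpa using ⟨(hb k).1, (hb k).2.trans hyt⟩
    · intro i j hij
      induction i using Fin.cases with
      | zero =>
        induction j using Fin.cases with
        | zero => simp
        | succ k => simpa using (hb k).2
      | succ k =>
        induction j using Fin.cases with
        | zero =>
          exfalso
          simp [Fin.le_def] at hij
        | succ l =>
          have := ha k l (by rwa [← Fin.succ_le_succ_iff])
          simpa using this

lemma chenTerm_succ (A : ℝ → E) (hA : Continuous A) (s t : ℝ) (m : ℕ) :
    chenTerm A s t (m+1) = ∫ y in Icc s t, A y * chenTerm A s y m := by
  set F : (Fin (m+1) → ℝ) → E := fun u => (List.ofFn fun i => A (u i)).prod with hF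
  set P := simplex s t (m+1) with hP
  have hPm : MeasurableSet P := measurableSet_simplex s t (m+1)
  have hint : Integrable (P.indicator F) :=
    (integrable_indicator_iff hPm).mpr (integrableOn_prodFn A hA s t (m+1))
  set e := MeasurableEquiv.piFinSuccAbove (fun _ : Fin (m+1) => ℝ) 0 with he
  have hmp : MeasurePreserving e.symm
      ((volume : Measure ℝ).prod (volume : Measure (Fin m → ℝ)))
      (volume : Measure (Fin (m+1) → ℝ)) :=
    (measurePreserving_piFinSuccAbove (fun _ : Fin (m+1) => (volume : Measure ℝ)) 0).symm
  have hsymm : ∀ (y : ℝ) (v : Fin m → ℝ), e.symm (y, v) = Fin.cons y v := by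
    intro y v
    show (Fin.insertNthEquiv (fun _ => ℝ) 0) (y, v) = Fin.cons y v
    simp [Fin.insertNthEquiv, Fin.insertNth_zero']
  have step1 : chenTerm A s t (m+1) = ∫ u, P.indicator F u := by
    rw [chenTerm_def, integral_indicator hPm]
  have hintG : Integrable (fun p : ℝ × (Fin m → ℝ) => P.indicator F (e.symm p))
      ((volume : Measure ℝ).prod (volume : Measure (Fin m → ℝ))) := by
    exact (hmp.integrable_comp hint.aestronglyMeasurable).mpr hint
  have step2 : ∫ u, P.indicator F u
      = ∫ p : ℝ × (Fin m → ℝ), P.indicator F (e.symm p)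
          ∂((volume : Measure ℝ).prod (volume : Measure (Fin m → ℝ))) := by
    exact (hmp.integral_comp' _).symm
  have step3 : ∫ p : ℝ × (Fin m → ℝ), P.indicator F (e.symm p)
          ∂((volume : Measure ℝ).prod (volume : Measure (Fin m → ℝ)))
      = ∫ y : ℝ, ∫ v : Fin m → ℝ, P.indicator F (e.symm (y, v)) := by
    exact integral_prod _ hintG
  have inner : ∀ y : ℝ, (∫ v : Fin m → ℝ, P.indicator F (e.symm (y, v)))
      = (Icc s t).indicator (fun y => A y * chenTerm A s y m) y := by
    intro y
    by_cases hy : y ∈ Icc s t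
    · rw [indicator_of_mem hy]
      have key : ∀ v : Fin m → ℝ, P.indicator F (e.symm (y, v))
          = (simplex s y m).indicator
              (fun v => A y * (List.ofFn fun i => A (v i)).prod) v := by
        intro v
        rw [hsymm]
        by_cases hv : v ∈ simplex s y m
        · rw [indicator_of_mem ((cons_mem_simplex_iff s t y v).mpr ⟨hy, hv⟩),
            indicator_of_mem hv]
          simp only [hF, List.ofFn_succ, List.prod_cons, Fin.cons_zero, Fin.cons_succ]
        · rw [indicator_of_notMem, indicator_of_notMem hv]
          intro hmem
          exact hv ((cons_mem_simplex_iff s t y v).mp hmem).2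
      simp_rw [key]
      rw [integral_indicator (measurableSet_simplex s y m)]
      have := ContinuousLinearMap.integral_comp_comm
        (ContinuousLinearMap.mul ℝ E (A y)) (integrableOn_prodFn A hA s y m)
      simpa [chenTerm_def] using this
    · rw [indicator_of_notMem hy]
      have key : ∀ v : Fin m → ℝ, P.indicator F (e.symm (y, v)) = 0 := by
        intro v
        rw [hsymm, indicator_of_notMem]
        intro hmem
        exact hy ((cons_mem_simplex_iff s t y v).mp hmem).1
      simp_rw [key, integral_zero]
  calc chenTerm A s t (m+1) = _ := step1
    _ = _ := step2
    _ = _ := step3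
    _ = ∫ y : ℝ, (Icc s t).indicator (fun y => A y * chenTerm A s y m) y := by
        simp_rw [inner]
    _ = ∫ y in Icc s t, A y * chenTerm A s y m := integral_indicator measurableSet_Icc

lemma continuousOn_chenTerm (A : ℝ → E) (hA : Continuous A) (s : ℝ) :
    ∀ m : ℕ, ContinuousOn (fun t => chenTerm A s t m) (Ici s) := by
  intro m
  induction m with
  | zero => simpa [chenTerm_zero] using continuousOn_const
  | succ m ih =>
    have hclamp : Continuous fun y : ℝ => max s y := continuous_const.max continuous_id
    have hg : Continuous fun y => chenTerm A s (max s y) m :=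
      ih.comp_continuous hclamp fun y => le_max_left s y
    have hf' : Continuous fun y => A y * chenTerm A s (max s y) m := hA.mul hg
    have hprim : Continuous fun τ => ∫ y in s..τ, A y * chenTerm A s (max s y) m :=
      intervalIntegral.continuous_primitive (fun a b => hf'.intervalIntegrable a b) s
    apply hprim.continuousOn.congr
    intro t ht
    show chenTerm A s t (m+1) = ∫ y in s..t, A y * chenTerm A s (max s y) m
    rw [chenTerm_succ A hA s t m,
      show (∫ y in Icc s t, A y * chenTerm A s y m)
          = ∫ y in Icc s t, A y * chenTerm A s (max s y) m from
        setIntegral_congr_fun measurableSet_Icc fun y hy => by rw [max_eq_right hy.1],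
      integral_Icc_eq_integral_Ioc, ← intervalIntegral.integral_of_le ht]

lemma chenTerm_norm_le (A : ℝ → E) (hA : Continuous A) {s T M : ℝ}
    (hM : 0 ≤ M) (hbd : ∀ y ∈ Icc s T, ‖A y‖ ≤ M) :
    ∀ m : ℕ, ∀ t ∈ Icc s T,
      ‖chenTerm A s t m‖ ≤ ‖(1 : E)‖ * (M * (t - s)) ^ m / m.factorial := by
  intro m
  induction m with
  | zero => intro t ht; simp [chenTerm_zero]
  | succ m ih =>
    intro t ht
    have hst : s ≤ t := ht.1
    have htT : t ≤ T := ht.2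
    rw [chenTerm_succ A hA s t m]
    have hb : ∀ y ∈ Icc s t, ‖A y * chenTerm A s y m‖
        ≤ M * (‖(1:E)‖ * (M * (y - s)) ^ m / m.factorial) := by
      intro y hy
      have hyT : y ∈ Icc s T := ⟨hy.1, hy.2.trans htT⟩
      calc ‖A y * chenTerm A s y m‖ ≤ ‖A y‖ * ‖chenTerm A s y m‖ := norm_mul_le _ _
        _ ≤ M * (‖(1:E)‖ * (M * (y - s)) ^ m / m.factorial) :=
          mul_le_mul (hbd y hyT) (ih y hyT) (norm_nonneg _) hM
    have hgint : IntegrableOn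
        (fun y => M * (‖(1:E)‖ * (M * (y - s)) ^ m / m.factorial)) (Icc s t) := by
      apply Continuous.integrableOn_Icc
      continuity
    have key : ‖∫ y in Icc s t, A y * chenTerm A s y m‖
        ≤ ∫ y in Icc s t, M * (‖(1:E)‖ * (M * (y - s)) ^ m / m.factorial) :=
      norm_integral_le_of_norm_le hgint (ae_restrict_of_forall_mem measurableSet_Icc hb)
    refine key.trans (le_of_eq ?_)
    have hI : (∫ y in Icc s t, (y - s) ^ m) = (t - s) ^ (m + 1) / (m + 1) := by
      rw [integral_Icc_eq_integral_Ioc, ← intervalIntegral.integral_of_le hst,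
        intervalIntegral.integral_comp_sub_right (fun x => x ^ m) s]
      simp [integral_pow]
    have hsplit : (∫ y in Icc s t, M * (‖(1:E)‖ * (M * (y - s)) ^ m / m.factorial))
        = (M * (‖(1:E)‖ * M ^ m / m.factorial)) * ∫ y in Icc s t, (y - s) ^ m := by
      rw [← integral_const_mul]
      apply setIntegral_congr_fun measurableSet_Icc
      intro y _
      simp only [mul_pow]
      ring
    rw [hsplit, hI, Nat.factorial_succ, mul_pow]
    have h1 : (m.factorial : ℝ) ≠ 0 := Nat.cast_ne_zero.mpr m.factorial_ne_zero
    have h2 : (m : ℝ) + 1 ≠ 0 := by positivity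
    push_cast
    field_simp
    ring

lemma sum_eq_integral (A : ℝ → E) (hA : Continuous A) {s t : ℝ} (hst : s ≤ t) :
    (∑' m : ℕ, chenTerm A s t (m + 1))
      = ∫ y in Icc s t, A y * (1 + ∑' m : ℕ, chenTerm A s y (m + 1)) := by
  obtain ⟨M, hM, hbd⟩ : ∃ M, 0 ≤ M ∧ ∀ y ∈ Icc s t, ‖A y‖ ≤ M := by
    obtain ⟨C, hC⟩ := isCompact_Icc.exists_bound_of_continuousOn hA.continuousOn
    exact ⟨max C 0, le_max_right _ _, fun y hy => (hC y hy).trans (le_max_left _ _)⟩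
  have hts : 0 ≤ t - s := sub_nonneg.mpr hst
  have hbound := chenTerm_norm_le A hA hM hbd
  have hsummany : ∀ y ∈ Icc s t, Summable fun m => chenTerm A s y m := by
    intro y hy
    apply Summable.of_norm
    apply Summable.of_nonneg_of_le (fun m => norm_nonneg _) (fun m => hbound m y hy)
    simpa [mul_div_assoc] using
      (Real.summable_pow_div_factorial (M * (y - s))).mul_left ‖(1:E)‖
  have hΦ : ∀ y ∈ Icc s t,
      (1 : E) + ∑' m : ℕ, chenTerm A s y (m + 1) = ∑' m : ℕ, chenTerm A s y m := by
    intro y hy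
    rw [Summable.tsum_eq_zero_add (hsummany y hy), chenTerm_zero]
  have hmeas : ∀ m : ℕ, AEStronglyMeasurable (fun y => A y * chenTerm A s y m)
      ((volume : Measure ℝ).restrict (Icc s t)) := fun m =>
    ((hA.continuousOn.mul ((continuousOn_chenTerm A hA s m).mono
      Icc_subset_Ici_self)).aestronglyMeasurable measurableSet_Icc)
  have hlin : (∑' m : ℕ, ∫⁻ y, ‖A y * chenTerm A s y m‖₊
      ∂((volume : Measure ℝ).restrict (Icc s t))) ≠ ⊤ := by
    set d : ℕ → ℝ :=
      fun m => M * (‖(1:E)‖ * (M * (t - s)) ^ m / m.factorial) * (t - s) with hd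
    have hdnn : ∀ m, 0 ≤ d m := by
      intro m
      have := norm_nonneg (1 : E)
      positivity
    have hdsum : Summable d := by
      have h0 : Summable fun m : ℕ => (M * (t - s)) ^ m / m.factorial :=
        Real.summable_pow_div_factorial _
      simpa [hd, mul_div_assoc] using ((h0.mul_left ‖(1:E)‖).mul_left M).mul_right (t - s)
    have hle : ∀ m : ℕ, (∫⁻ y, ‖A y * chenTerm A s y m‖₊
        ∂((volume : Measure ℝ).restrict (Icc s t))) ≤ ENNReal.ofReal (d m) := by
      intro m
      have hb : ∀ y ∈ Icc s t, (‖A y * chenTerm A s y m‖₊ : ℝ≥0∞)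
          ≤ ENNReal.ofReal (M * (‖(1:E)‖ * (M * (t - s)) ^ m / m.factorial)) := by
        intro y hy
        rw [← enorm_eq_nnnorm, ← ofReal_norm_eq_enorm]
        apply ENNReal.ofReal_le_ofReal
        calc ‖A y * chenTerm A s y m‖ ≤ ‖A y‖ * ‖chenTerm A s y m‖ := norm_mul_le _ _
          _ ≤ M * (‖(1:E)‖ * (M * (t - s)) ^ m / m.factorial) := by
            apply mul_le_mul (hbd y hy) ?_ (norm_nonneg _) hM
            refine (hbound m y hy).trans ?_
            have hpow : (M * (y - s)) ^ m ≤ (M * (t - s)) ^ m :=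
              pow_le_pow_left₀ (mul_nonneg hM (sub_nonneg.mpr hy.1))
                (mul_le_mul_of_nonneg_left (sub_le_sub_right hy.2 s) hM) m
            gcongr
      calc (∫⁻ y, ‖A y * chenTerm A s y m‖₊
            ∂((volume : Measure ℝ).restrict (Icc s t)))
          ≤ ∫⁻ (_ : ℝ) in Icc s t,
              ENNReal.ofReal (M * (‖(1:E)‖ * (M * (t - s)) ^ m / m.factorial)) :=
            setLIntegral_mono' measurableSet_Icc hb
        _ = ENNReal.ofReal (M * (‖(1:E)‖ * (M * (t - s)) ^ m / m.factorial))
              * volume (Icc s t) := by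
            rw [setLIntegral_const]
        _ ≤ ENNReal.ofReal (d m) := by
            rw [Real.volume_Icc, hd, ← ENNReal.ofReal_mul (by positivity)]
    refine ne_top_of_le_ne_top ?_ (ENNReal.tsum_le_tsum hle)
    rw [← ENNReal.ofReal_tsum_of_nonneg hdnn hdsum]
    exact ENNReal.ofReal_ne_top
  calc (∑' m : ℕ, chenTerm A s t (m + 1))
      = ∑' m : ℕ, ∫ y in Icc s t, A y * chenTerm A s y m :=
        tsum_congr fun m => chenTerm_succ A hA s t m
    _ = ∫ y in Icc s t, ∑' m : ℕ, A y * chenTerm A s y m := (integral_tsum hmeas hlin).symm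
    _ = ∫ y in Icc s t, A y * (1 + ∑' m : ℕ, chenTerm A s y (m + 1)) := by
        apply setIntegral_congr_fun measurableSet_Icc
        intro y hy
        simp only
        rw [Summable.tsum_mul_left _ (hsummany y hy), hΦ y hy]

end Chen

/-- Let `E` be a Banach algebra with unit, `A : ℝ → E`
continuous and `s` a real number.  Then for every `t ≥ s` the series of
Chen iterated integrals
`Φ(t,s) = 1 + ∑_{m ≥ 1} ∫_{s ≤ t_m ≤ ⋯ ≤ t₁ ≤ t} A(t₁)⋯A(t_m) dt₁⋯dt_m`
converges absolutely, and the resulting function `t ↦ Φ(t,s)` satisfies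
`Φ(s,s) = 1` and `∂ₜ Φ(t,s) = A(t)·Φ(t,s)` for `t ≥ s`; i.e. the iterated
integral series is the parallel transport of the connection `d - A`. -/
theorem statement12 {E : Type*} [NormedRing E] [NormedAlgebra ℝ E]
    [CompleteSpace E]
    (A : ℝ → E) (hA : Continuous A) (s : ℝ) :
    (∀ t : ℝ, s ≤ t → Summable fun m : ℕ => ‖chenTerm A s t (m + 1)‖)
    ∧ (1 + ∑' m : ℕ, chenTerm A s s (m + 1)) = 1
    ∧ ∀ t : ℝ, s ≤ t →
        HasDerivWithinAt (fun τ => 1 + ∑' m : ℕ, chenTerm A s τ (m + 1))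
          (A t * (1 + ∑' m : ℕ, chenTerm A s t (m + 1)))
          (Set.Ici s) t := by
  have hbddOn : ∀ T : ℝ, ∃ M, 0 ≤ M ∧ ∀ y ∈ Icc s T, ‖A y‖ ≤ M := by
    intro T
    obtain ⟨C, hC⟩ := isCompact_Icc.exists_bound_of_continuousOn hA.continuousOn
    exact ⟨max C 0, le_max_right _ _, fun y hy => (hC y hy).trans (le_max_left _ _)⟩
  refine ⟨?_, ?_, ?_⟩
  · intro t ht
    obtain ⟨M, hM, hbd⟩ := hbddOn t
    have hbound := Chen.chenTerm_norm_le A hA hM hbd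
    apply Summable.of_nonneg_of_le (fun m => norm_nonneg _)
      (fun m => hbound (m + 1) t ⟨ht, le_refl t⟩)
    have h1 : Summable fun m : ℕ => (M * (t - s)) ^ m / m.factorial :=
      Real.summable_pow_div_factorial _
    have h2 : Summable fun m : ℕ => (M * (t - s)) ^ (m + 1) / (m + 1).factorial :=
      (summable_nat_add_iff
        (f := fun m : ℕ => (M * (t - s)) ^ m / m.factorial) 1).mpr h1
    simpa [mul_div_assoc] using h2.mul_left ‖(1 : E)‖
  · have hz : ∀ m : ℕ, chenTerm A s s (m + 1) = 0 := by
      intro m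
      rw [Chen.chenTerm_succ A hA s s m]
      have hv : (volume : Measure ℝ) (Icc s s) = 0 := by
        simp [Real.volume_Icc]
      rw [Measure.restrict_eq_zero.mpr hv, integral_zero_measure]
    simp [hz]
  · intro t ht
    set T := t + 1 with hT
    have hsT : s ≤ T := by simp [hT]; linarith
    have htT : t < T := by simp [hT]
    obtain ⟨M, hM, hbd⟩ := hbddOn T
    have hbound := Chen.chenTerm_norm_le A hA hM hbd
    -- clamp function
    set c : ℝ → ℝ := fun y => max s (min y T) with hc
    have hccont : Continuous c := continuous_const.max (continuous_id.min continuous_const)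
    have hcmem : ∀ y, c y ∈ Icc s T := fun y =>
      ⟨le_max_left _ _, max_le hsT (min_le_right _ _)⟩
    have hceq : ∀ y ∈ Icc s T, c y = y := by
      intro y hy
      rw [hc]
      simp only
      rw [min_eq_left hy.2, max_eq_right hy.1]
    -- continuity of the clamped series
    have hGcont : ∀ m : ℕ, Continuous fun y => chenTerm A s (c y) (m + 1) := fun m =>
      (Chen.continuousOn_chenTerm A hA s (m + 1)).comp_continuous hccont
        fun y => (hcmem y).1
    have hsum0 : Summable fun m : ℕ => ‖(1 : E)‖ * (M * (T - s)) ^ (m + 1)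
        / (m + 1).factorial := by
      have h1 : Summable fun m : ℕ => (M * (T - s)) ^ m / m.factorial :=
        Real.summable_pow_div_factorial _
      have h2 : Summable fun m : ℕ => (M * (T - s)) ^ (m + 1) / (m + 1).factorial :=
        (summable_nat_add_iff
          (f := fun m : ℕ => (M * (T - s)) ^ m / m.factorial) 1).mpr h1
      simpa [mul_div_assoc] using h2.mul_left ‖(1 : E)‖
    have hΦTcont : Continuous fun y => ∑' m : ℕ, chenTerm A s (c y) (m + 1) := by
      apply continuous_tsum hGcont hsum0
      intro m y
      refine (hbound (m + 1) (c y) (hcmem y)).trans ?_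
      have hpow : (M * (c y - s)) ^ (m + 1) ≤ (M * (T - s)) ^ (m + 1) :=
        pow_le_pow_left₀ (mul_nonneg hM (sub_nonneg.mpr (hcmem y).1))
          (mul_le_mul_of_nonneg_left (sub_le_sub_right (hcmem y).2 s) hM) (m + 1)
      gcongr
    set ΦT : ℝ → E := fun y => 1 + ∑' m : ℕ, chenTerm A s (c y) (m + 1) with hΦT
    have hΦTc : Continuous ΦT := continuous_const.add hΦTcont
    set h : ℝ → E := fun y => A y * ΦT y with hh
    have hhcont : Continuous h := hA.mul hΦTc
    -- identity on Icc s T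
    have hid : ∀ τ ∈ Icc s T, (1 + ∑' m : ℕ, chenTerm A s τ (m + 1))
        = 1 + ∫ y in s..τ, h y := by
      intro τ hτ
      have h1 := Chen.sum_eq_integral A hA hτ.1
      have h2 : ∀ y ∈ Icc s τ,
          A y * (1 + ∑' m : ℕ, chenTerm A s y (m + 1)) = h y := by
        intro y hy
        have hymem : y ∈ Icc s T := ⟨hy.1, hy.2.trans hτ.2⟩
        rw [hh, hΦT]
        simp only
        rw [hceq y hymem]
      rw [h1, setIntegral_congr_fun measurableSet_Icc h2,
        integral_Icc_eq_integral_Ioc, ← intervalIntegral.integral_of_le hτ.1]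
    -- FTC
    have hder : HasDerivAt (fun τ => 1 + ∫ y in s..τ, h y) (h t) t := by
      have := intervalIntegral.integral_hasDerivAt_right
        (hhcont.intervalIntegrable s t)
        (hhcont.stronglyMeasurableAtFilter volume (nhds t))
        hhcont.continuousAt
      simpa using this.const_add (1 : E)
    have hmem : Icc s T ∈ nhdsWithin t (Ici s) := by
      have : Ici s ∩ Iic T ∈ nhdsWithin t (Ici s) :=
        Filter.inter_mem self_mem_nhdsWithin
          (mem_nhdsWithin_of_mem_nhds (Iic_mem_nhds htT))
      rwa [Ici_inter_Iic] at this
    have heq : (fun τ => 1 + ∑' m : ℕ, chenTerm A s τ (m + 1))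
        =ᶠ[nhdsWithin t (Ici s)] (fun τ => 1 + ∫ y in s..τ, h y) := by
      filter_upwards [hmem] with τ hτ using hid τ hτ
    have hfinal := (hder.hasDerivWithinAt (s := Ici s)).congr_of_eventuallyEq heq
      (hid t ⟨ht, htT.le⟩)
    have hval : h t = A t * (1 + ∑' m : ℕ, chenTerm A s t (m + 1)) := by
      rw [hh, hΦT]
      simp only
      rw [hceq t ⟨ht, htT.le⟩]
    rwa [hval] at hfinal
end

section
/- Let E be a Banach algebra with unit 1, A : [0,1] → E continuous, and Φ : [0,1] → E the solution of Φ′(t) = A(t)·Φ(t) with Φ(0) = 1. For each n ≥ 1 let P_n = (1 + A(n/n)·(1/n))·(1 + A((n−1)/n)·(1/n))⋯(1 + A(1/n)·(1/n)) be the product over the uniform partition of [0,1], multiplied right to left (the factor with the larger sample point on the left). Then P_n → Φ(1) in E as n → ∞. -/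
open Filter

private def discProd {E : Type*} [NormedRing E] (v : ℕ → E) : ℕ → E
  | 0 => 1
  | (k+1) => v (k+1) * discProd v k

private lemma ofFn_eq_discProd {E : Type*} [NormedRing E] (v : ℕ → E) :
    ∀ n, (List.ofFn fun i : Fin n => v (n - (i : ℕ))).prod = discProd v n := by
  intro n
  induction n with
  | zero => simp [discProd]
  | succ n ih =>
    rw [List.ofFn_succ, List.prod_cons, discProd]
    simp only [Fin.val_zero, Nat.sub_zero, Fin.val_succ, Nat.succ_sub_succ]
    rw [ih]



/-- Let `E` be a Banach algebra with unit,
`A : [0,1] → E` continuous, and `Φ` the solution of `Φ'(t) = A(t)·Φ(t)` with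
`Φ(0) = 1`.  Then the right-to-left products
`P_n = (1 + A(n/n)·(1/n))·(1 + A((n-1)/n)·(1/n)) ⋯ (1 + A(1/n)·(1/n))`
over the uniform partition of `[0,1]` (the factor with the larger sample
point on the left) converge to `Φ(1)` as `n → ∞`. -/
theorem statement13 {E : Type*} [NormedRing E] [NormedAlgebra ℝ E]
    [CompleteSpace E]
    (A : ℝ → E) (hA : ContinuousOn A (Set.Icc 0 1))
    (Φ : ℝ → E)
    (hΦ : ∀ t ∈ Set.Icc (0 : ℝ) 1,
      HasDerivWithinAt Φ (A t * Φ t) (Set.Icc 0 1) t)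
    (hΦ0 : Φ 0 = 1) :
    Filter.Tendsto
      (fun n : ℕ =>
        (List.ofFn fun i : Fin n =>
          (1 : E) + ((n : ℝ)⁻¹) • A (((n : ℝ) - (i : ℕ)) / n)).prod)
      Filter.atTop (nhds (Φ 1)) := by
  have hΦc : ContinuousOn Φ (Set.Icc 0 1) := fun t ht => (hΦ t ht).continuousWithinAt
  have hFc : ContinuousOn (fun t => A t * Φ t) (Set.Icc 0 1) := hA.mul hΦc
  obtain ⟨M0, hM0⟩ := isCompact_Icc.exists_bound_of_continuousOn hA
  set M : ℝ := max M0 0 with hMdef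
  have hMnn : (0:ℝ) ≤ M := le_max_right _ _
  have hMA : ∀ t ∈ Set.Icc (0:ℝ) 1, ‖A t‖ ≤ M := fun t ht => (hM0 t ht).trans (le_max_left _ _)
  have hUF := isCompact_Icc.uniformContinuousOn_of_continuous hFc
  have hUΦ := isCompact_Icc.uniformContinuousOn_of_continuous hΦc
  rw [Metric.uniformContinuousOn_iff] at hUF hUΦ
  rw [Metric.tendsto_atTop]
  intro ε hε
  have hexp : 0 < Real.exp M := Real.exp_pos M
  set ε₁ : ℝ := ε / (2 * Real.exp M) with hε₁def
  set ε₂ : ℝ := ε / (2 * (M+1) * Real.exp M) with hε₂def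
  have hM1 : (0:ℝ) < M + 1 := by linarith
  have hε₁pos : 0 < ε₁ := by rw [hε₁def]; positivity
  have hε₂pos : 0 < ε₂ := by rw [hε₂def]; positivity
  obtain ⟨δ₁, hδ₁pos, hδ₁⟩ := hUF ε₁ hε₁pos
  obtain ⟨δ₂, hδ₂pos, hδ₂⟩ := hUΦ ε₂ hε₂pos
  set δ : ℝ := min δ₁ δ₂ with hδdef
  have hδpos : 0 < δ := lt_min hδ₁pos hδ₂pos
  obtain ⟨N0, hN0⟩ := exists_nat_one_div_lt hδpos
  set C : ℝ := ε₁ + M * ε₂ with hCdef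
  have hCpos : 0 < C := by
    have := mul_nonneg hMnn hε₂pos.le
    rw [hCdef]; linarith
  refine ⟨N0 + 1, fun n hn => ?_⟩
  have hn1 : 1 ≤ n := le_trans (Nat.le_add_left 1 N0) hn
  have hnR : (1:ℝ) ≤ (n:ℝ) := by exact_mod_cast hn1
  have hnpos : (0:ℝ) < n := lt_of_lt_of_le one_pos hnR
  set h : ℝ := (n:ℝ)⁻¹ with hhdef
  have hhpos : 0 < h := by rw [hhdef]; exact inv_pos.2 hnpos
  have hcast : ((N0:ℝ)+1) ≤ (n:ℝ) := by exact_mod_cast hn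
  have hhδ : h < δ := by
    refine lt_of_le_of_lt ?_ hN0
    rw [hhdef, one_div]
    exact inv_anti₀ (by positivity) hcast
  set v : ℕ → E := fun k => 1 + h • A ((k:ℝ)/n) with hvdef
  have hPn : (List.ofFn fun i : Fin n =>
      (1 : E) + h • A (((n : ℝ) - (i : ℕ)) / n)).prod = discProd v n := by
    rw [← ofFn_eq_discProd v n]
    refine congrArg List.prod (congrArg List.ofFn ?_)
    funext i
    have hcast2 : ((n - (i:ℕ) : ℕ):ℝ) = (n:ℝ) - (i:ℕ) := Nat.cast_sub (le_of_lt i.isLt)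
    simp only [hvdef, hcast2]
  have hmem : ∀ k : ℕ, k ≤ n → ((k:ℝ)/n) ∈ Set.Icc (0:ℝ) 1 := by
    intro k hk
    constructor
    · positivity
    · rw [div_le_one hnpos]; exact_mod_cast hk
  -- one-step estimate
  have hstep : ∀ k : ℕ, k < n →
      ‖Φ (((k:ℝ)+1)/n) - v (k+1) * Φ ((k:ℝ)/n)‖ ≤ h * C := by
    intro k hk
    set a : ℝ := (k:ℝ)/n with hadef
    set b : ℝ := ((k:ℝ)+1)/n with hbdef
    have haI : a ∈ Set.Icc (0:ℝ) 1 := hmem k hk.le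
    have hbI : b ∈ Set.Icc (0:ℝ) 1 := by
      have := hmem (k+1) hk
      rw [hbdef]; push_cast at this; exact this
    have hba : b - a = h := by
      rw [hadef, hbdef, div_sub_div_same, add_sub_cancel_left, hhdef, one_div]
    have hab : a ≤ b := by linarith
    have hsub : Set.Icc a b ⊆ Set.Icc (0:ℝ) 1 := Set.Icc_subset_Icc haI.1 hbI.2
    set c : E := A b * Φ a with hcdef
    set g : ℝ → E := fun t => Φ t - t • c with hgdef
    have hveq : v (k+1) = 1 + h • A b := by
      simp only [hvdef, hbdef]; push_cast; ring_nf
    have hder : ∀ t ∈ Set.Icc a b, HasDerivWithinAt g (A t * Φ t - c) (Set.Icc a b) t := by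
      intro t ht
      have h1 := (hΦ t (hsub ht)).mono hsub
      have h2 : HasDerivWithinAt (fun t : ℝ => t • c) c (Set.Icc a b) t := by
        simpa using ((hasDerivAt_id t).smul_const c).hasDerivWithinAt
      exact h1.sub h2
    have hbound : ∀ t ∈ Set.Icc a b, ‖A t * Φ t - c‖ ≤ C := by
      intro t ht
      have htI := hsub ht
      have hd1 : dist t b < δ₁ := by
        rw [Real.dist_eq, abs_sub_lt_iff]
        constructor
        · linarith [ht.2]
        · have := ht.1
          have : b - t ≤ h := by linarith
          linarith [lt_of_lt_of_le hhδ (min_le_left δ₁ δ₂)]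
      have hd2 : dist b a < δ₂ := by
        rw [Real.dist_eq, abs_of_nonneg (by linarith : (0:ℝ) ≤ b - a), hba]
        exact lt_of_lt_of_le hhδ (min_le_right δ₁ δ₂)
      have hFtb : ‖A t * Φ t - A b * Φ b‖ ≤ ε₁ := by
        have := hδ₁ t htI b hbI hd1
        rw [dist_eq_norm] at this
        exact this.le
      have hΦba : ‖Φ b - Φ a‖ ≤ ε₂ := by
        have := hδ₂ b hbI a haI hd2
        rw [dist_eq_norm] at this
        exact this.le
      calc ‖A t * Φ t - c‖
          = ‖(A t * Φ t - A b * Φ b) + A b * (Φ b - Φ a)‖ := by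
            rw [hcdef, mul_sub]; congr 1; abel
        _ ≤ ‖A t * Φ t - A b * Φ b‖ + ‖A b * (Φ b - Φ a)‖ := norm_add_le _ _
        _ ≤ ε₁ + M * ε₂ := by
            refine add_le_add hFtb ?_
            exact (norm_mul_le _ _).trans
              (mul_le_mul (hMA b hbI) hΦba (norm_nonneg _) hMnn)
        _ = C := hCdef.symm
    have hmvt := (convex_Icc a b).norm_image_sub_le_of_norm_hasDerivWithin_le hder hbound
      (Set.left_mem_Icc.2 hab) (Set.right_mem_Icc.2 hab)
    have hnb : ‖b - a‖ = h := by rw [Real.norm_eq_abs, hba, abs_of_pos hhpos]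
    have hkey : Φ b - v (k+1) * Φ a = g b - g a := by
      rw [hveq, hgdef]
      simp only []
      rw [add_mul, one_mul, smul_mul_assoc, ← hcdef,
        show h • c = (b-a) • c from by rw [hba], sub_smul]
      abel
    rw [hkey]
    calc ‖g b - g a‖ ≤ C * ‖b - a‖ := hmvt
      _ = h * C := by rw [hnb, mul_comm]
  -- product growth bound
  have hgrow : ∀ k : ℕ, k < n → ∀ D : E, ‖v (k+1) * D‖ ≤ (1 + h*M) * ‖D‖ := by
    intro k hk D
    have hbI : (((k:ℝ)+1)/n) ∈ Set.Icc (0:ℝ) 1 := by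
      have := hmem (k+1) hk
      push_cast at this; exact this
    have hveq : v (k+1) = 1 + h • A (((k:ℝ)+1)/n) := by
      simp only [hvdef]; push_cast; ring_nf
    have hv : v (k+1) * D = D + h • (A (((k:ℝ)+1)/n) * D) := by
      rw [hveq, add_mul, one_mul, smul_mul_assoc]
    rw [hv]
    calc ‖D + h • (A (((k:ℝ)+1)/n) * D)‖
        ≤ ‖D‖ + ‖h • (A (((k:ℝ)+1)/n) * D)‖ := norm_add_le _ _
      _ = ‖D‖ + h * ‖A (((k:ℝ)+1)/n) * D‖ := by
          rw [norm_smul, Real.norm_eq_abs, abs_of_pos hhpos]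
      _ ≤ ‖D‖ + h * (M * ‖D‖) := by
          refine add_le_add le_rfl (mul_le_mul_of_nonneg_left ?_ hhpos.le)
          exact (norm_mul_le _ _).trans
            (mul_le_mul_of_nonneg_right (hMA _ hbI) (norm_nonneg _))
      _ = (1 + h*M) * ‖D‖ := by ring
  have hone : (1:ℝ) ≤ 1 + h*M := by nlinarith
  -- main induction
  have hmain : ∀ k : ℕ, k ≤ n →
      ‖Φ ((k:ℝ)/n) - discProd v k‖ ≤ (k:ℝ) * (h * C) * (1 + h*M)^k := by
    intro k
    induction k with
    | zero => intro _; simp [discProd, hΦ0]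
    | succ k ih =>
      intro hk1
      have hk : k ≤ n := Nat.le_of_succ_le hk1
      have hlt : k < n := Nat.lt_of_succ_le hk1
      have ihk := ih hk
      have hp1 : (1:ℝ) ≤ (1 + h*M)^(k+1) := one_le_pow₀ hone
      have hXnn : (0:ℝ) ≤ (1 + h*M)^k := pow_nonneg (by linarith) k
      push_cast
      calc ‖Φ (((k:ℝ)+1)/n) - discProd v (k+1)‖
          = ‖(Φ (((k:ℝ)+1)/n) - v (k+1) * Φ ((k:ℝ)/n))
              + v (k+1) * (Φ ((k:ℝ)/n) - discProd v k)‖ := by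
            rw [discProd, mul_sub]; congr 1; abel
        _ ≤ ‖Φ (((k:ℝ)+1)/n) - v (k+1) * Φ ((k:ℝ)/n)‖
              + ‖v (k+1) * (Φ ((k:ℝ)/n) - discProd v k)‖ := norm_add_le _ _
        _ ≤ h * C + (1 + h*M) * ‖Φ ((k:ℝ)/n) - discProd v k‖ :=
            add_le_add (hstep k hlt) (hgrow k hlt _)
        _ ≤ h * C + (1 + h*M) * ((k:ℝ) * (h * C) * (1 + h*M)^k) := by
            refine add_le_add le_rfl (mul_le_mul_of_nonneg_left ihk (by linarith))
        _ ≤ ((k:ℝ)+1) * (h * C) * (1 + h*M)^(k+1) := by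
            have e1 : h * C + (1 + h*M) * ((k:ℝ) * (h * C) * (1 + h*M)^k)
                = h * C + (k:ℝ) * ((h * C) * (1 + h*M)^(k+1)) := by
              rw [pow_succ]; ring
            have e2 : ((k:ℝ)+1) * (h * C) * (1 + h*M)^(k+1)
                = (k:ℝ) * ((h * C) * (1 + h*M)^(k+1)) + (h*C) * (1 + h*M)^(k+1) := by
              ring
            have e3 : h * C ≤ (h*C) * (1 + h*M)^(k+1) :=
              le_mul_of_one_le_right (by positivity) hp1
            rw [e1, e2]
            linarith
  -- conclude
  have hn_main := hmain n le_rfl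
  rw [div_self hnpos.ne'] at hn_main
  have hnh : (n:ℝ) * (h * C) = C := by
    rw [hhdef, ← mul_assoc, mul_inv_cancel₀ hnpos.ne', one_mul]
  have hpow : (1 + h*M)^n ≤ Real.exp M := by
    have h1 : (1 + h*M) ≤ Real.exp (h*M) := by
      linarith [Real.add_one_le_exp (h*M)]
    calc (1 + h*M)^n ≤ (Real.exp (h*M))^n := pow_le_pow_left₀ (by positivity) h1 n
      _ = Real.exp ((n:ℝ) * (h*M)) := (Real.exp_nat_mul _ n).symm
      _ = Real.exp M := by
          rw [hhdef, ← mul_assoc, mul_inv_cancel₀ hnpos.ne', one_mul]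
  have hfinal : ‖Φ 1 - discProd v n‖ ≤ C * Real.exp M := by
    calc ‖Φ 1 - discProd v n‖ ≤ (n:ℝ) * (h * C) * (1 + h*M)^n := hn_main
      _ = C * (1 + h*M)^n := by rw [hnh]
      _ ≤ C * Real.exp M := mul_le_mul_of_nonneg_left hpow hCpos.le
  have hCe : C * Real.exp M < ε := by
    have heq : C * Real.exp M = ε/2 + ε * (M/(M+1)) / 2 := by
      rw [hCdef, hε₁def, hε₂def]
      field_simp
    rw [heq]
    have hlt : M/(M+1) < 1 := (div_lt_one hM1).2 (by linarith)
    nlinarith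
  rw [dist_eq_norm, hPn, norm_sub_rev]
  exact lt_of_le_of_lt hfinal hCe
end

section
/- Let E be a Banach algebra with unit 1 and A : ℝ × ℝ → E continuous, with continuous partial derivative ∂_x A in the first variable. For x ∈ ℝ and a, b ∈ ℝ let T_x(b,a) ∈ E denote the parallel transport in the second variable: the unique solution of ∂_b T_x(b,a) = A(x,b)·T_x(b,a) with T_x(a,a) = 1. Then for fixed a, b the map x ↦ T_x(b,a) is differentiable, and ∂_x T_x(b,a) = ∫_a^b T_x(b,z)·(∂_x A)(x,z)·T_x(z,a) dz. -/
open intervalIntegral Set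

set_option linter.unusedSectionVars false

section aux

variable {E : Type*} [NormedRing E] [NormedAlgebra ℝ E] [CompleteSpace E]

private lemma ode_norm_le_fwd {B f : ℝ → E} {K : ℝ}
    (hf : ∀ t, HasDerivAt f (B t * f t) t) {t₀ t : ℝ} (hle : t₀ ≤ t)
    (hK : ∀ s ∈ Set.Icc t₀ t, ‖B s‖ ≤ K) :
    ‖f t‖ ≤ ‖f t₀‖ * Real.exp (K * (t - t₀)) := by
  have h := norm_le_gronwallBound_of_norm_deriv_right_le
    (f := f) (f' := fun s => B s * f s) (δ := ‖f t₀‖) (K := K) (ε := 0) (a := t₀) (b := t)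
    (fun s _ => (hf s).continuousAt.continuousWithinAt)
    (fun s _ => (hf s).hasDerivWithinAt) le_rfl
    (fun s hs => by
      have h1 : ‖B s * f s‖ ≤ ‖B s‖ * ‖f s‖ := norm_mul_le _ _
      have h2 : ‖B s‖ * ‖f s‖ ≤ K * ‖f s‖ :=
        mul_le_mul_of_nonneg_right (hK s ⟨hs.1, hs.2.le⟩) (norm_nonneg _)
      linarith) t ⟨hle, le_rfl⟩
  rwa [gronwallBound_ε0] at h

private lemma ode_norm_le {B f : ℝ → E} {K : ℝ}
    (hf : ∀ t, HasDerivAt f (B t * f t) t) (t₀ t : ℝ)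
    (hK : ∀ s ∈ Set.uIcc t₀ t, ‖B s‖ ≤ K) :
    ‖f t‖ ≤ ‖f t₀‖ * Real.exp (K * |t - t₀|) := by
  rcases le_total t₀ t with h | h
  · rw [abs_of_nonneg (by linarith)]
    exact ode_norm_le_fwd hf h (fun s hs => hK s (by rwa [Set.uIcc_of_le h]))
  · have hg' : ∀ s, HasDerivAt (fun u => f (2 * t₀ - u))
        ((-B (2 * t₀ - s)) * f (2 * t₀ - s)) s := by
      intro s
      have hi : HasDerivAt (fun u : ℝ => 2 * t₀ - u) (-1) s := by
        simpa using (hasDerivAt_id s).const_sub (2 * t₀)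
      have := (hf (2 * t₀ - s)).scomp s hi
      simpa [neg_smul, one_smul, neg_mul, Function.comp_def] using this
    have hle : t₀ ≤ 2 * t₀ - t := by linarith
    have hK' : ∀ s ∈ Set.Icc t₀ (2 * t₀ - t), ‖-B (2 * t₀ - s)‖ ≤ K := by
      intro s hs
      rw [norm_neg]
      apply hK
      rw [Set.uIcc_of_ge h]
      exact ⟨by linarith [hs.2], by linarith [hs.1]⟩
    have := ode_norm_le_fwd hg' hle hK'
    simp only [show (2:ℝ) * t₀ - (2 * t₀ - t) = t by ring,
      show (2:ℝ) * t₀ - t₀ = t₀ by ring] at this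
    rwa [show K * (2 * t₀ - t - t₀) = K * |t - t₀| by
      rw [abs_of_nonpos (by linarith : t - t₀ ≤ 0)]; ring] at this

private lemma ode_unique {B : ℝ → E} (hB : Continuous B) {f g : ℝ → E}
    (hf : ∀ t, HasDerivAt f (B t * f t) t) (hg : ∀ t, HasDerivAt g (B t * g t) t)
    {t₀ : ℝ} (h0 : f t₀ = g t₀) (t : ℝ) : f t = g t := by
  obtain ⟨K, hK⟩ := (isCompact_uIcc (a := t₀) (b := t)).exists_bound_of_continuousOn
    hB.continuousOn
  have hd : ∀ s, HasDerivAt (fun u => f u - g u) (B s * (f s - g s)) s := fun s => by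
    simpa [mul_sub] using (show HasDerivAt (fun u => f u - g u) (B s * f s - B s * g s) s from (hf s).sub (hg s))
  have h := ode_norm_le hd t₀ t hK
  rw [h0, sub_self, norm_zero, zero_mul] at h
  have := norm_le_zero_iff.mp h
  exact sub_eq_zero.mp this

end aux

section Tlem

variable {E : Type*} [NormedRing E] [NormedAlgebra ℝ E] [CompleteSpace E]
variable {A A' : ℝ × ℝ → E} {T : ℝ → ℝ → ℝ → E}

private lemma contA_snd (hA : Continuous A) (x : ℝ) : Continuous fun t => A (x, t) :=
  hA.comp (continuous_const.prodMk continuous_id)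

private lemma Tcocycle (hA : Continuous A)
    (hT1 : ∀ x a : ℝ, T x a a = 1)
    (hTode : ∀ x a b : ℝ, HasDerivAt (fun b' => T x b' a) (A (x, b) * T x b a) b)
    (x a b c : ℝ) : T x c b * T x b a = T x c a := by
  refine ode_unique (contA_snd hA x)
    (f := fun u => T x u b * T x b a) (g := fun u => T x u a)
    (fun s => by simpa [mul_assoc] using (hTode x b s).mul_const (T x b a))
    (fun s => hTode x a s) (t₀ := b) (by show T x b b * T x b a = T x b a; rw [hT1, one_mul]) c

private lemma Tinv (hA : Continuous A)
    (hT1 : ∀ x a : ℝ, T x a a = 1)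
    (hTode : ∀ x a b : ℝ, HasDerivAt (fun b' => T x b' a) (A (x, b) * T x b a) b)
    (x a b : ℝ) : T x a b * T x b a = 1 := by
  have := Tcocycle hA hT1 hTode x a b a
  rwa [hT1] at this

private lemma Tderiv_snd (hA : Continuous A)
    (hT1 : ∀ x a : ℝ, T x a a = 1)
    (hTode : ∀ x a b : ℝ, HasDerivAt (fun b' => T x b' a) (A (x, b) * T x b a) b)
    (x b z : ℝ) :
    HasDerivAt (fun z' => T x b z') (-(T x b z * A (x, z))) z := by
  have hu : ∀ z' : ℝ, Ring.inverse (T x z' b) = T x b z' := by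
    intro z'
    have u : Eˣ := ⟨T x z' b, T x b z', Tinv hA hT1 hTode x z' b, Tinv hA hT1 hTode x b z'⟩
    exact Ring.inverse_unit ⟨T x z' b, T x b z', Tinv hA hT1 hTode x z' b,
      Tinv hA hT1 hTode x b z'⟩
  have hd := (hasFDerivAt_ringInverse (𝕜 := ℝ)
      (⟨T x z b, T x b z, Tinv hA hT1 hTode x z b, Tinv hA hT1 hTode x b z⟩ : Eˣ)).comp_hasDerivAt
      z (hTode x b z)
  have heq : (fun z' => Ring.inverse (T x z' b)) = fun z' => T x b z' := funext hu
  rw [Function.comp_def] at hd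
  rw [heq] at hd
  convert hd using 1
  · rfl
  simp only [ContinuousLinearMap.neg_apply, ContinuousLinearMap.mulLeftRight_apply]
  rw [neg_inj]
  show T x b z * A (x, z) = T x b z * (A (x, z) * T x z b) * T x b z
  rw [mul_assoc (T x b z), mul_assoc (A (x, z)), Tinv hA hT1 hTode x z b, mul_one]

private lemma Tcont_snd (hA : Continuous A)
    (hT1 : ∀ x a : ℝ, T x a a = 1)
    (hTode : ∀ x a b : ℝ, HasDerivAt (fun b' => T x b' a) (A (x, b) * T x b a) b)
    (x b : ℝ) : Continuous fun z => T x b z :=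
  continuous_iff_continuousAt.mpr fun z => (Tderiv_snd hA hT1 hTode x b z).continuousAt

private lemma Tcont_fst
    (hTode : ∀ x a b : ℝ, HasDerivAt (fun b' => T x b' a) (A (x, b) * T x b a) b)
    (x a : ℝ) : Continuous fun z => T x z a :=
  continuous_iff_continuousAt.mpr fun z => (hTode x a z).continuousAt

private lemma duhamel (hA : Continuous A)
    (hT1 : ∀ x a : ℝ, T x a a = 1)
    (hTode : ∀ x a b : ℝ, HasDerivAt (fun b' => T x b' a) (A (x, b) * T x b a) b)
    (x y a b : ℝ) :
    T x b a - T y b a = ∫ z in a..b, T x b z * (A (x, z) - A (y, z)) * T y z a := by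
  have hderiv : ∀ z ∈ Set.uIcc a b, HasDerivAt (fun u => T x b u * T y u a)
      (-(T x b z * (A (x, z) - A (y, z)) * T y z a)) z := by
    intro z _
    have h1 := (Tderiv_snd hA hT1 hTode x b z).mul (hTode y a z)
    convert h1 using 1
    · rfl
    noncomm_ring
  have hcont : Continuous fun z => -(T x b z * (A (x, z) - A (y, z)) * T y z a) :=
    (((Tcont_snd hA hT1 hTode x b).mul ((contA_snd hA x).sub (contA_snd hA y))).mul
      (Tcont_fst hTode y a)).neg
  have h := integral_eq_sub_of_hasDerivAt hderiv (hcont.intervalIntegrable a b)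
  rw [intervalIntegral.integral_neg] at h
  rw [hT1, one_mul, hT1, mul_one] at h
  have h2 := congrArg Neg.neg h
  rw [neg_neg, neg_sub] at h2
  exact h2.symm

end Tlem

private lemma mem_uIcc_abs {a b z w : ℝ} (hz : z ∈ Set.uIcc a b) (hw : w ∈ Set.uIcc a b) :
    |w - z| ≤ |b - a| := by
  rcases le_total a b with h | h
  · rw [Set.uIcc_of_le h] at hz hw
    rw [abs_of_nonneg (by linarith : (0:ℝ) ≤ b - a), abs_sub_le_iff]
    exact ⟨by linarith [hz.1, hw.2], by linarith [hw.1, hz.2]⟩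
  · rw [Set.uIcc_of_ge h] at hz hw
    rw [abs_of_nonpos (by linarith : b - a ≤ 0), abs_sub_le_iff]
    exact ⟨by linarith [hw.2, hz.1], by linarith [hz.2, hw.1]⟩

private lemma norm_mul3_le {E : Type*} [NormedRing E] (u v w : E) :
    ‖u * v * w‖ ≤ ‖u‖ * ‖v‖ * ‖w‖ :=
  (norm_mul_le _ _).trans (mul_le_mul_of_nonneg_right (norm_mul_le u v) (norm_nonneg w))

set_option maxHeartbeats 1000000 in
/-- the Duhamel / variation formula for parallel transport
depending on a parameter.  Let `E` be a Banach algebra with unit and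
`A : ℝ × ℝ → E` continuous with continuous partial derivative `∂ₓA = A'` in
the first variable.  For each `x`, let `T x · a` be the parallel transport
in the second variable: `∂_b T x b a = A(x,b) · T x b a`, `T x a a = 1`.
Then for fixed `a, b` the map `x ↦ T x b a` is differentiable, and
`∂ₓ T x b a = ∫_a^b T x b z · (∂ₓA)(x,z) · T x z a dz`. -/
theorem statement14 {E : Type*} [NormedRing E] [NormedAlgebra ℝ E]
    [CompleteSpace E]
    (A A' : ℝ × ℝ → E)
    (hA : Continuous A) (hA' : Continuous A')
    (hdA : ∀ x z : ℝ, HasDerivAt (fun x' => A (x', z)) (A' (x, z)) x)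
    (T : ℝ → ℝ → ℝ → E)
    (hT1 : ∀ x a : ℝ, T x a a = 1)
    (hTode : ∀ x a b : ℝ,
      HasDerivAt (fun b' => T x b' a) (A (x, b) * T x b a) b) :
    ∀ x a b : ℝ,
      HasDerivAt (fun x' => T x' b a)
        (∫ z in a..b, T x b z * A' (x, z) * T x z a) x := by
  intro x a b
  set Kx : Set ℝ := Set.Icc (x - 1) (x + 1) with hKxdef
  have hxK : x ∈ Kx := ⟨by linarith, by linarith⟩
  have hcomp : IsCompact (Kx ×ˢ Set.uIcc a b) := isCompact_Icc.prod isCompact_uIcc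
  obtain ⟨K₀, hK₀⟩ := hcomp.exists_bound_of_continuousOn hA.continuousOn
  obtain ⟨L₀, hL₀⟩ := hcomp.exists_bound_of_continuousOn hA'.continuousOn
  set K := max K₀ 0 with hKdef
  set L := max L₀ 0 with hLdef
  have hK0 : 0 ≤ K := le_max_right _ _
  have hL0 : 0 ≤ L := le_max_right _ _
  have hKb : ∀ x' ∈ Kx, ∀ z ∈ Set.uIcc a b, ‖A (x', z)‖ ≤ K := fun x' hx' z hz =>
    (hK₀ _ ⟨hx', hz⟩).trans (le_max_left _ _)
  have hLb : ∀ x' ∈ Kx, ∀ z ∈ Set.uIcc a b, ‖A' (x', z)‖ ≤ L := fun x' hx' z hz =>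
    (hL₀ _ ⟨hx', hz⟩).trans (le_max_left _ _)
  set M := ‖(1 : E)‖ * Real.exp (K * |b - a|) with hMdef
  have hM0 : 0 ≤ M := mul_nonneg (norm_nonneg _) (Real.exp_nonneg _)
  have hM : ∀ x' ∈ Kx, ∀ z ∈ Set.uIcc a b, ∀ w ∈ Set.uIcc a b, ‖T x' w z‖ ≤ M := by
    intro x' hx' z hz w hw
    have h1 := ode_norm_le (B := fun t => A (x', t)) (f := fun u => T x' u z)
      (fun u => hTode x' z u) z w
      (fun s hs => hKb x' hx' s (Set.uIcc_subset_uIcc hz hw hs))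
    simp only [hT1] at h1
    refine h1.trans ?_
    exact mul_le_mul_of_nonneg_left
      (Real.exp_le_exp.mpr (mul_le_mul_of_nonneg_left (mem_uIcc_abs hz hw) hK0))
      (norm_nonneg _)
  have hAint : ∀ z : ℝ, Continuous fun s => A' (s, z) := fun z =>
    hA'.comp (continuous_id.prodMk continuous_const)
  have hAFTC : ∀ x' z : ℝ, A (x', z) - A (x, z) = ∫ s in x..x', A' (s, z) := by
    intro x' z
    rw [intervalIntegral.integral_eq_sub_of_hasDerivAt (fun s _ => hdA s z)
      ((hAint z).intervalIntegrable x x')]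
  have hΔ : ∀ x' ∈ Kx, ∀ z ∈ Set.uIcc a b, ‖A (x', z) - A (x, z)‖ ≤ L * |x' - x| := by
    intro x' hx' z hz
    rw [hAFTC x' z]
    apply intervalIntegral.norm_integral_le_of_norm_le_const
    intro s hs
    exact hLb s (Set.ordConnected_Icc.uIcc_subset hxK hx' (Set.Ioc_subset_Icc_self hs)) z hz
  have hTd : ∀ x' ∈ Kx, ∀ z ∈ Set.uIcc a b,
      ‖T x' b z - T x b z‖ ≤ M * (L * |x' - x|) * M * |b - a| := by
    intro x' hx' z hz
    rw [duhamel hA hT1 hTode x' x z b]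
    have hb : b ∈ Set.uIcc a b := Set.right_mem_uIcc
    have h1 : ∀ w ∈ Set.uIoc z b, ‖T x' b w * (A (x', w) - A (x, w)) * T x w z‖
        ≤ M * (L * |x' - x|) * M := by
      intro w hw
      have hwm : w ∈ Set.uIcc a b := Set.uIcc_subset_uIcc hz hb (Set.Ioc_subset_Icc_self hw)
      refine (norm_mul3_le _ _ _).trans ?_
      exact mul_le_mul (mul_le_mul (hM x' hx' w hwm b hb) (hΔ x' hx' w hwm)
        (norm_nonneg _) hM0) (hM x hxK z hz w hwm) (norm_nonneg _) (by positivity)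
    refine (intervalIntegral.norm_integral_le_of_norm_le_const h1).trans ?_
    exact mul_le_mul_of_nonneg_left (mem_uIcc_abs hz hb) (by positivity)
  rw [hasDerivAt_iff_isLittleO, Asymptotics.isLittleO_iff]
  intro c hc
  set Q := M * M * M * L * L * |b - a| * |b - a| with hQdef
  have hQ0 : 0 ≤ Q := by positivity
  set ε₁ := c / (2 * (M + 1) * (M + 1) * (|b - a| + 1)) with hε₁def
  have hε₁ : 0 < ε₁ := by positivity
  set δ₂ := c / (2 * (Q + 1)) with hδ₂def
  have hδ₂ : 0 < δ₂ := by positivity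
  obtain ⟨δ₁, hδ₁pos, hδ₁'⟩ := Metric.uniformContinuousOn_iff.mp
    (hcomp.uniformContinuousOn_of_continuous hA'.continuousOn) ε₁ hε₁
  have hδ : 0 < min 1 (min δ₁ δ₂) := lt_min one_pos (lt_min hδ₁pos hδ₂)
  filter_upwards [Metric.ball_mem_nhds x hδ] with x' hmem
  rw [Metric.mem_ball, Real.dist_eq] at hmem
  have hr0 : (0:ℝ) ≤ |x' - x| := abs_nonneg _
  have hr1 : |x' - x| ≤ 1 := le_of_lt (lt_of_lt_of_le hmem (min_le_left _ _))
  have hrδ₁ : |x' - x| < δ₁ :=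
    lt_of_lt_of_le hmem ((min_le_right _ _).trans (min_le_left _ _))
  have hrδ₂ : |x' - x| ≤ δ₂ :=
    le_of_lt (lt_of_lt_of_le hmem ((min_le_right _ _).trans (min_le_right _ _)))
  have hx'K : x' ∈ Kx :=
    ⟨by linarith [(abs_le.mp hr1).1], by linarith [(abs_le.mp hr1).2]⟩
  have hΔ2 : ∀ z ∈ Set.uIcc a b,
      ‖A (x', z) - A (x, z) - (x' - x) • A' (x, z)‖ ≤ ε₁ * |x' - x| := by
    intro z hz
    have hconst : (x' - x) • A' (x, z) = ∫ _ in x..x', A' (x, z) := by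
      rw [intervalIntegral.integral_const]
    rw [hAFTC x' z, hconst, ← intervalIntegral.integral_sub
      ((hAint z).intervalIntegrable x x') intervalIntegrable_const]
    apply intervalIntegral.norm_integral_le_of_norm_le_const
    intro s hs
    have hsm : s ∈ Kx :=
      Set.ordConnected_Icc.uIcc_subset hxK hx'K (Set.Ioc_subset_Icc_self hs)
    have hsd : |s - x| ≤ |x' - x| :=
      mem_uIcc_abs Set.left_mem_uIcc (Set.Ioc_subset_Icc_self hs)
    have hd := hδ₁' (s, z) ⟨hsm, hz⟩ (x, z) ⟨hxK, hz⟩ (by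
      rw [Prod.dist_eq]
      simp only [dist_self, Real.dist_eq]
      exact max_lt (lt_of_le_of_lt hsd hrδ₁) hδ₁pos)
    rw [dist_eq_norm] at hd
    exact hd.le
  have hcont1 : Continuous fun z => T x' b z * (A (x', z) - A (x, z)) * T x z a :=
    ((Tcont_snd hA hT1 hTode x' b).mul ((contA_snd hA x').sub (contA_snd hA x))).mul
      (Tcont_fst hTode x a)
  have hcont2 : Continuous fun z => (x' - x) • (T x b z * A' (x, z) * T x z a) :=
    ((((Tcont_snd hA hT1 hTode x b).mul (contA_snd hA' x)).mul
      (Tcont_fst hTode x a)).const_smul _)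
  have key : T x' b a - T x b a - (x' - x) • (∫ z in a..b, T x b z * A' (x, z) * T x z a)
      = ∫ z in a..b, (T x' b z * (A (x', z) - A (x, z)) * T x z a
          - (x' - x) • (T x b z * A' (x, z) * T x z a)) := by
    rw [intervalIntegral.integral_sub (hcont1.intervalIntegrable a b)
      (hcont2.intervalIntegrable a b), intervalIntegral.integral_smul,
      ← duhamel hA hT1 hTode x' x a b]
  show ‖T x' b a - T x b a - (x' - x) • (∫ z in a..b, T x b z * A' (x, z) * T x z a)‖
      ≤ c * ‖x' - x‖
  rw [key]
  have hbound : ∀ z ∈ Set.uIoc a b,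
      ‖T x' b z * (A (x', z) - A (x, z)) * T x z a
        - (x' - x) • (T x b z * A' (x, z) * T x z a)‖
      ≤ M * (L * |x' - x|) * M * |b - a| * (L * |x' - x|) * M
        + M * (ε₁ * |x' - x|) * M := by
    intro z hz
    have hzm : z ∈ Set.uIcc a b := Set.Ioc_subset_Icc_self hz
    have hrew : T x' b z * (A (x', z) - A (x, z)) * T x z a
        - (x' - x) • (T x b z * A' (x, z) * T x z a)
        = (T x' b z - T x b z) * (A (x', z) - A (x, z)) * T x z a
          + T x b z * (A (x', z) - A (x, z) - (x' - x) • A' (x, z)) * T x z a := by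
      simp only [sub_mul, mul_sub, smul_mul_assoc, mul_smul_comm, add_mul]
      abel
    rw [hrew]
    have e1 := hTd x' hx'K z hzm
    have e2 := hΔ x' hx'K z hzm
    have e3 := hM x hxK a Set.left_mem_uIcc z hzm
    have e4 := hM x hxK z hzm b Set.right_mem_uIcc
    have e5 := hΔ2 z hzm
    refine (norm_add_le _ _).trans ?_
    refine add_le_add ((norm_mul3_le _ _ _).trans ?_) ((norm_mul3_le _ _ _).trans ?_)
    · exact mul_le_mul (mul_le_mul e1 e2 (norm_nonneg _) (by positivity)) e3
        (norm_nonneg _) (by positivity)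
    · exact mul_le_mul (mul_le_mul e4 e5 (norm_nonneg _) hM0) e3
        (norm_nonneg _) (by positivity)
  refine (intervalIntegral.norm_integral_le_of_norm_le_const hbound).trans ?_
  rw [Real.norm_eq_abs]
  have hexp : (M * (L * |x' - x|) * M * |b - a| * (L * |x' - x|) * M
        + M * (ε₁ * |x' - x|) * M) * |b - a|
      = (Q * |x' - x| + M * M * |b - a| * ε₁) * |x' - x| := by
    rw [hQdef]; ring
  rw [hexp]
  have h2Q : (0:ℝ) < 2 * (Q + 1) := by positivity
  have key1 : Q * δ₂ ≤ c / 2 := by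
    rw [hδ₂def, mul_div_assoc']
    rw [div_le_div_iff₀ h2Q two_pos]
    nlinarith [hc.le, hQ0]
  have hY : (0:ℝ) < 2 * (M + 1) * (M + 1) * (|b - a| + 1) := by positivity
  have key2 : M * M * |b - a| * ε₁ ≤ c / 2 := by
    rw [hε₁def, mul_div_assoc']
    rw [div_le_div_iff₀ hY two_pos]
    nlinarith [hc.le, hM0, abs_nonneg (b - a),
      mul_nonneg (mul_nonneg hc.le hM0) hM0,
      mul_nonneg (mul_nonneg (mul_nonneg hc.le hM0) hM0) (abs_nonneg (b - a)),
      mul_nonneg (mul_nonneg hc.le hM0) (abs_nonneg (b - a)),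
      mul_nonneg hc.le hM0, mul_nonneg hc.le (abs_nonneg (b - a))]
  have h1 : Q * |x' - x| ≤ Q * δ₂ := mul_le_mul_of_nonneg_left hrδ₂ hQ0
  have hsum : Q * |x' - x| + M * M * |b - a| * ε₁ ≤ c := by linarith
  exact mul_le_mul_of_nonneg_right hsum (abs_nonneg _)
end
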